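/- arXiv:math/0112146 — 6 statements merged into one kernel-verified Lean document; each statement's English description precedes it below -/
import Mathlib

section
/- Let G = (V,E) be a finite simple graph with |V| = n ≥ 1, and let G' be the graph on the disjoint union V ⊎ W, where |W| = n, whose edges are exactly all pairs of distinct nodes of V ⊎ W that do not belong to E. Then the edge expansion of G' equals h(G') = n − (max{|δ_G(S)| : S ⊆ V})/n, i.e., computing h(G') is equivalent to computing a maximum cut in G. -/
open scoped Classical

noncomputable section

/-- The number of edges of `G` leaving the set `S`, counted as ordered pairs
`(u, v)` with `u ∈ S`, `v ∉ S` and `u ~ v` (each cut edge is counted once). -/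
def cutCard {V : Type*} [Fintype V] (G : SimpleGraph V) (S : Set V) : ℕ :=
  {p : V × V | p.1 ∈ S ∧ p.2 ∉ S ∧ G.Adj p.1 p.2}.ncard

/-- The edge expansion `h(G)` of a finite graph: the infimum of `|δ(S)|/|S|`
over all nonempty `S` with `|S| ≤ |V|/2`. -/
noncomputable def edgeExpansion {V : Type*} [Fintype V] (G : SimpleGraph V) : ℝ :=
  sInf { r : ℝ | ∃ S : Set V, S.Nonempty ∧ 2 * S.ncard ≤ Fintype.card V ∧
    r = (cutCard G S : ℝ) / (S.ncard : ℝ) }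
/-- The graph `G'` on the disjoint union `V ⊎ W`, whose edges are exactly all
pairs of distinct nodes that do not form an edge of `G` (inside the copy of `V`). -/
def compJoinGraph {V W : Type*} (G : SimpleGraph V) : SimpleGraph (V ⊕ W) where
  Adj a b := a ≠ b ∧ ¬ ∃ u v, a = Sum.inl u ∧ b = Sum.inl v ∧ G.Adj u v
  symm := by
    constructor
    rintro a b ⟨h1, h2⟩
    refine ⟨h1.symm, ?_⟩
    rintro ⟨u, v, ha, hb, hadj⟩
    exact h2 ⟨v, u, hb, ha, hadj.symm⟩
  loopless := ⟨fun a h => h.1 rfl⟩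


/-!
In `compJoinGraph G` every pair of distinct vertices is adjacent except the edges of `G`, so
for `S ⊆ V ⊎ W` the cut of `S` there and the cut of `S ∩ V` in `G` together exhaust `S × Sᶜ`:
`|δ_{G'}(S)| = |S| (2n - |S|) - |δ_G(S ∩ V)|`. With `s = |S| ≤ n` and `M` the maximum cut of `G`,
`c = |δ_G(S ∩ V)| ≤ min(M, s n)`, so `n c = (n - s) c + s c ≤ (n - s) s n + s M`, which is
`|δ_{G'}(S)| / s ≥ n - M / n`. Equality is attained by a maximum cut side of `G` padded with
vertices of `W` up to size `n`.
-/

open Set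

lemma Set.exists_preimage_inl_eq_ncard_eq {V W : Type*} [Finite V] [Finite W] (T : Set V)
    {k : ℕ} (hTk : T.ncard ≤ k) (hk : k ≤ T.ncard + Nat.card W) :
    ∃ S : Set (V ⊕ W), Sum.inl ⁻¹' S = T ∧ S.ncard = k := by
  have hcard : (Sum.inl '' T ∪ range Sum.inr : Set (V ⊕ W)).ncard = T.ncard + Nat.card W := by
    rw [ncard_union_eq (disjoint_image_inl_range_inr ..),
      ncard_image_of_injective _ Sum.inl_injective, ← image_univ,
      ncard_image_of_injective _ Sum.inr_injective, ncard_univ]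
  obtain ⟨S, hTS, hS, rfl⟩ := exists_subsuperset_card_eq subset_union_left
    (by rwa [ncard_image_of_injective _ Sum.inl_injective]) (hcard ▸ hk)
  exact ⟨S, Subset.antisymm (fun v hv => by simpa using hS hv) fun v hv => hTS ⟨v, hv, rfl⟩, rfl⟩

namespace SimpleGraph

variable {V W : Type*} [Fintype V] [Fintype W] (G : SimpleGraph V)

lemma cutCard_eq_ncard_prod_inter (S : Set V) :
    cutCard G S = ((S ×ˢ Sᶜ) ∩ {p | G.Adj p.1 p.2}).ncard := by
  unfold cutCard
  congr 1
  ext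
  simp [and_assoc]

lemma cutCard_le_ncard_mul_card (S : Set V) : cutCard G S ≤ S.ncard * Fintype.card V := by
  calc cutCard G S ≤ (S ×ˢ Sᶜ).ncard := by
        rw [cutCard_eq_ncard_prod_inter]
        exact ncard_le_ncard inter_subset_left
    _ = S.ncard * Sᶜ.ncard := ncard_prod
    _ ≤ S.ncard * Fintype.card V := by
        gcongr
        simpa using Sᶜ.ncard_le_card

def maxCut : ℕ := sSup {k | ∃ S : Set V, k = cutCard G S}

lemma bddAbove_cutCard : BddAbove {k | ∃ S : Set V, k = cutCard G S} :=
  (finite_range (cutCard G)).bddAbove.mono <| by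
    rintro _ ⟨S, rfl⟩
    exact ⟨S, rfl⟩

lemma cutCard_le_maxCut (S : Set V) : cutCard G S ≤ maxCut G :=
  le_csSup (bddAbove_cutCard G) ⟨S, rfl⟩

lemma exists_cutCard_eq_maxCut : ∃ S : Set V, cutCard G S = maxCut G := by
  obtain ⟨S, hS⟩ : maxCut G ∈ {k | ∃ S : Set V, k = cutCard G S} :=
    Nat.sSup_mem ⟨_, ∅, rfl⟩ (bddAbove_cutCard G)
  exact ⟨S, hS.symm⟩

lemma cutCard_compJoinGraph_add_cutCard_preimage_inl (S : Set (V ⊕ W)) :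
    cutCard (compJoinGraph G : SimpleGraph (V ⊕ W)) S + cutCard G (Sum.inl ⁻¹' S) =
      S.ncard * Sᶜ.ncard := by
  set G' : SimpleGraph (V ⊕ W) := compJoinGraph G
  have hnonadj : Prod.map Sum.inl Sum.inl '' (((Sum.inl ⁻¹' S) ×ˢ (Sum.inl ⁻¹' S)ᶜ) ∩
      {p | G.Adj p.1 p.2}) = (S ×ˢ Sᶜ) \ {p | G'.Adj p.1 p.2} := by
    ext ⟨a, b⟩
    constructor
    · rintro ⟨⟨u, v⟩, ⟨⟨hu, hv⟩, huv⟩, hab⟩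
      simp only [Prod.map, Prod.mk.injEq] at hab
      obtain ⟨rfl, rfl⟩ := hab
      exact ⟨⟨hu, hv⟩, fun h => h.2 ⟨u, v, rfl, rfl, huv⟩⟩
    · rintro ⟨⟨ha, hb⟩, hab⟩
      have hne : a ≠ b := fun h => hb (h ▸ ha)
      obtain ⟨u, v, rfl, rfl, huv⟩ : ∃ u v, a = Sum.inl u ∧ b = Sum.inl v ∧ G.Adj u v := by
        by_contra h
        exact hab ⟨hne, h⟩
      exact ⟨(u, v), ⟨⟨ha, hb⟩, huv⟩, rfl⟩
  rw [cutCard_eq_ncard_prod_inter G,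
    ← ncard_image_of_injective _ (Sum.inl_injective.prodMap Sum.inl_injective),
    hnonadj, cutCard_eq_ncard_prod_inter, ncard_inter_add_ncard_sdiff_eq_ncard, ncard_prod]

variable {G} in
lemma card_sub_maxCut_div_le_cutCard_compJoinGraph_div (hW : Fintype.card W = Fintype.card V)
    {S : Set (V ⊕ W)} (hS : S.Nonempty) (hSn : 2 * S.ncard ≤ Fintype.card (V ⊕ W)) :
    (Fintype.card V : ℝ) - maxCut G / Fintype.card V ≤
      cutCard (compJoinGraph G : SimpleGraph (V ⊕ W)) S / S.ncard := by
  set n := Fintype.card V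
  set s := S.ncard
  set c := cutCard G (Sum.inl ⁻¹' S)
  rw [Fintype.card_sum, hW] at hSn
  have hs : (0 : ℝ) < s := by exact_mod_cast (ncard_pos).2 hS
  have hsn : (s : ℝ) ≤ n := by exact_mod_cast (by omega : s ≤ n)
  have hn : (0 : ℝ) < n := hs.trans_le hsn
  have hcompl : (Sᶜ.ncard : ℝ) = 2 * n - s := by
    have := ncard_add_ncard_compl S
    rw [Nat.card_eq_fintype_card, Fintype.card_sum, hW] at this
    rw [eq_sub_iff_add_eq', two_mul]
    exact_mod_cast this
  have hcut : (cutCard (compJoinGraph G : SimpleGraph (V ⊕ W)) S : ℝ) = s * (2 * n - s) - c := by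
    rw [← hcompl, eq_sub_iff_add_eq]
    exact_mod_cast cutCard_compJoinGraph_add_cutCard_preimage_inl G S
  have hcM : (c : ℝ) ≤ maxCut G := by exact_mod_cast cutCard_le_maxCut G _
  have hcs : (c : ℝ) ≤ s * n := by
    have : (Sum.inl ⁻¹' S).ncard ≤ s :=
      (ncard_image_of_injective _ Sum.inl_injective).symm.trans_le
        (ncard_le_ncard (image_preimage_subset _ _))
    exact_mod_cast (cutCard_le_ncard_mul_card G _).trans (Nat.mul_le_mul_right _ this)
  have key : (n : ℝ) * c ≤ (n - s) * (s * n) + s * maxCut G := by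
    calc n * (c : ℝ) = (n - s) * c + s * c := by ring
      _ ≤ (n - s) * (s * n) + s * maxCut G := by gcongr
  calc (n : ℝ) - maxCut G / n = (n * n - maxCut G) / n := by field_simp
    _ ≤ (s * (2 * n - s) - c) / s := by rw [div_le_div_iff₀ hn hs]; linarith
    _ = _ := by rw [hcut]

lemma exists_cutCard_compJoinGraph_div_eq (hn : 1 ≤ Fintype.card V)
    (hW : Fintype.card W = Fintype.card V) :
    ∃ S : Set (V ⊕ W), S.Nonempty ∧ 2 * S.ncard ≤ Fintype.card (V ⊕ W) ∧
      (Fintype.card V : ℝ) - maxCut G / Fintype.card V =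
        cutCard (compJoinGraph G : SimpleGraph (V ⊕ W)) S / S.ncard := by
  set n := Fintype.card V
  obtain ⟨T, hT⟩ := exists_cutCard_eq_maxCut G
  have hTn : T.ncard ≤ n := by simpa using T.ncard_le_card
  obtain ⟨S, hST, hS⟩ := T.exists_preimage_inl_eq_ncard_eq (W := W) hTn
    (by rw [Nat.card_eq_fintype_card, hW]; omega)
  have hSc : Sᶜ.ncard = n := by
    have := ncard_add_ncard_compl S
    rw [Nat.card_eq_fintype_card, Fintype.card_sum, hW, hS] at this
    omega
  have hcut := cutCard_compJoinGraph_add_cutCard_preimage_inl G S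
  rw [hST, hT, hS, hSc] at hcut
  refine ⟨S, nonempty_of_ncard_ne_zero (by omega), by rw [Fintype.card_sum, hW, hS]; omega, ?_⟩
  have hcutR : (cutCard (compJoinGraph G : SimpleGraph (V ⊕ W)) S : ℝ) = n * n - maxCut G := by
    rw [eq_sub_iff_add_eq]
    exact_mod_cast hcut
  have hn : (n : ℝ) ≠ 0 := by positivity
  rw [hcutR, hS]
  field_simp

end SimpleGraph

open SimpleGraph in
/-- Let `G = (V, E)` with `|V| = n ≥ 1`, and let `G'` be the graph
on `V ⊎ W`, `|W| = n`, whose edges are exactly all pairs of distinct nodes not in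
`E`. Then `h(G') = n − (max{|δ_G(S)| : S ⊆ V})/n`. -/
theorem edgeExpansion_compJoinGraph_eq_maxcut {V W : Type*} [Fintype V] [Fintype W]
    (G : SimpleGraph V) (hn : 1 ≤ Fintype.card V)
    (hW : Fintype.card W = Fintype.card V) :
    edgeExpansion (compJoinGraph G : SimpleGraph (V ⊕ W)) =
      (Fintype.card V : ℝ) -
        ((sSup {k : ℕ | ∃ S : Set V, k = cutCard G S} : ℕ) : ℝ) / (Fintype.card V : ℝ) := by
  refine IsLeast.csInf_eq ⟨exists_cutCard_compJoinGraph_div_eq G hn hW, ?_⟩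
  rintro r ⟨S, hS, hSn, rfl⟩
  exact card_sub_maxCut_div_le_cutCard_compJoinGraph_div hW hS hSn
end
end

section
/- Let G = (V,E) be a finite simple graph with |V| = n ≥ 2. Suppose that for each ordered pair (s,t) ∈ V × V with s ≠ t there is a unit flow φ_{(s,t)} from s to t in the network N(G). Let φ := Σ_{(s,t)} φ_{(s,t)} and let φ_max := max{φ(a) : a ∈ A} (which is positive). Then h(G) ≥ n/(2·φ_max). -/
open scoped Classical

noncomputable section

/-- A unit flow from `s` to `t` in the network `N(G)`: a nonnegative function on
ordered pairs, supported on arcs of `N(G)`, whose net outflow is `1` at `s`,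
`-1` at `t`, and `0` elsewhere. -/
def IsUnitFlow {V : Type*} [Fintype V] [DecidableEq V] (G : SimpleGraph V)
    (s t : V) (φ : V × V → ℚ) : Prop :=
  (∀ p, 0 ≤ φ p) ∧ (∀ p : V × V, ¬ G.Adj p.1 p.2 → φ p = 0) ∧
  (∀ v : V, (∑ w, φ (v, w)) - (∑ w, φ (w, v)) =
      (if v = s then 1 else 0) - (if v = t then 1 else 0))

/-- A unit flow from `s ∈ T` to `t ∉ T` puts at least one unit of flow on arcs
leaving `T`. -/
lemma one_le_cutFlow {V : Type*} [Fintype V] [DecidableEq V] (G : SimpleGraph V)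
    (s t : V) (φ : V × V → ℚ) (h : IsUnitFlow G s t φ) (T : Finset V)
    (hs : s ∈ T) (ht : t ∉ T) :
    (1 : ℚ) ≤ ∑ u ∈ T, ∑ v ∈ Tᶜ, φ (u, v) := by
  obtain ⟨hpos, hsupp, hcons⟩ := h
  have key : ∑ v ∈ T, ((∑ w, φ (v, w)) - (∑ w, φ (w, v))) = 1 := by
    rw [Finset.sum_congr rfl (fun v _ => hcons v)]
    rw [Finset.sum_sub_distrib]
    simp [Finset.sum_ite_eq', hs, ht]
  have hA : ∀ v, (∑ w, φ (v, w)) = (∑ w ∈ T, φ (v, w)) + ∑ w ∈ Tᶜ, φ (v, w) :=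
    fun v => (Finset.sum_add_sum_compl T _).symm
  have hB : ∀ v, (∑ w, φ (w, v)) = (∑ w ∈ T, φ (w, v)) + ∑ w ∈ Tᶜ, φ (w, v) :=
    fun v => (Finset.sum_add_sum_compl T _).symm
  rw [Finset.sum_sub_distrib] at key
  rw [Finset.sum_congr rfl (fun v _ => hA v), Finset.sum_congr rfl (fun v _ => hB v),
    Finset.sum_add_distrib, Finset.sum_add_distrib] at key
  have hcomm : (∑ v ∈ T, ∑ w ∈ T, φ (v, w)) = ∑ v ∈ T, ∑ w ∈ T, φ (w, v) :=
    Finset.sum_comm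
  have hin : (0 : ℚ) ≤ ∑ v ∈ T, ∑ w ∈ Tᶜ, φ (w, v) :=
    Finset.sum_nonneg fun v _ => Finset.sum_nonneg fun w _ => hpos _
  linarith

/-- Let `G = (V, E)` with `|V| = n ≥ 2`. Suppose that for each
ordered pair `(s, t)` with `s ≠ t` there is a unit flow `φf s t` from `s` to `t`
in the network `N(G)`, let `φ` be the sum of all these flows and let `φmax` be the
maximum of `φ` over all arcs (which is positive). Then `h(G) ≥ n/(2·φmax)`. -/
theorem edgeExpansion_ge_of_flows {V : Type*} [Fintype V] [DecidableEq V]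
    (G : SimpleGraph V) (hn : 2 ≤ Fintype.card V)
    (φf : V → V → V × V → ℚ)
    (hflow : ∀ s t : V, s ≠ t → IsUnitFlow G s t (φf s t))
    (φmax : ℚ)
    (hub : ∀ p : V × V, G.Adj p.1 p.2 →
      (∑ s : V, ∑ t : V, if s = t then 0 else φf s t p) ≤ φmax)
    (hmem : ∃ p : V × V, G.Adj p.1 p.2 ∧
      (∑ s : V, ∑ t : V, if s = t then 0 else φf s t p) = φmax)
    (hpos : 0 < φmax) :
    (Fintype.card V : ℝ) / (2 * (φmax : ℝ)) ≤ edgeExpansion G := by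
  have hVne : Nonempty V := Fintype.card_pos_iff.mp (by omega)
  apply le_csInf
  · obtain ⟨v⟩ := hVne
    refine ⟨(cutCard G {v} : ℝ) / (({v} : Set V).ncard : ℝ), {v},
      Set.singleton_nonempty v, ?_, rfl⟩
    simp only [Set.ncard_singleton]
    omega
  · rintro r ⟨S, hSne, hScard, rfl⟩
    set n := Fintype.card V with hn_def
    set T : Finset V := S.toFinset with hT_def
    have hTcard : S.ncard = T.card := Set.ncard_eq_toFinset_card' S
    set k := T.card with hk_def
    set m := Tᶜ.card with hm_def
    have hkm : k + m = n := Finset.card_add_card_compl T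
    have hkpos : 0 < k := by
      rw [← hTcard]
      exact (Set.ncard_pos S.toFinite).mpr hSne
    have hnm : n ≤ 2 * m := by omega
    set Φ : V × V → ℚ := fun p => ∑ s : V, ∑ t : V, if s = t then 0 else φf s t p
      with hΦ_def
    set F : V → V → ℚ := fun s t => ∑ u ∈ T, ∑ v ∈ Tᶜ, φf s t (u, v) with hF_def
    set g : V → V → ℚ := fun s t => if s = t then 0 else F s t with hg_def
    -- swap sums
    have hswap : ∑ u ∈ T, ∑ v ∈ Tᶜ, Φ (u, v) = ∑ s : V, ∑ t : V, g s t := by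
      calc ∑ u ∈ T, ∑ v ∈ Tᶜ, ∑ s : V, ∑ t : V, (if s = t then 0 else φf s t (u, v))
          = ∑ u ∈ T, ∑ s : V, ∑ v ∈ Tᶜ, ∑ t : V, (if s = t then 0 else φf s t (u, v)) :=
            Finset.sum_congr rfl fun u _ => Finset.sum_comm
        _ = ∑ s : V, ∑ u ∈ T, ∑ v ∈ Tᶜ, ∑ t : V, (if s = t then 0 else φf s t (u, v)) :=
            Finset.sum_comm
        _ = ∑ s : V, ∑ u ∈ T, ∑ t : V, ∑ v ∈ Tᶜ, (if s = t then 0 else φf s t (u, v)) :=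
            Finset.sum_congr rfl fun s _ => Finset.sum_congr rfl fun u _ => Finset.sum_comm
        _ = ∑ s : V, ∑ t : V, ∑ u ∈ T, ∑ v ∈ Tᶜ, (if s = t then 0 else φf s t (u, v)) :=
            Finset.sum_congr rfl fun s _ => Finset.sum_comm
        _ = ∑ s : V, ∑ t : V, g s t := by
            refine Finset.sum_congr rfl fun s _ => Finset.sum_congr rfl fun t _ => ?_
            by_cases hst : s = t <;> simp [hg_def, hF_def, hst]
    have hgnonneg : ∀ s t : V, 0 ≤ g s t := by
      intro s t
      by_cases hst : s = t
      · simp [hg_def, hst]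
      · simp only [hg_def, hst, if_neg, if_false]
        exact Finset.sum_nonneg fun u _ => Finset.sum_nonneg fun v _ =>
          (hflow s t hst).1 _
    -- lower bound
    have hlow : (k : ℚ) * m ≤ ∑ u ∈ T, ∑ v ∈ Tᶜ, Φ (u, v) := by
      rw [hswap]
      have step1 : ∀ s ∈ T, (m : ℚ) ≤ ∑ t ∈ Tᶜ, g s t := by
        intro s hs
        have : (m : ℚ) = ∑ _t ∈ Tᶜ, (1 : ℚ) := by simp [hm_def]
        rw [this]
        refine Finset.sum_le_sum fun t ht => ?_
        have hst : s ≠ t := fun h => (Finset.mem_compl.mp ht) (h ▸ hs)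
        have := one_le_cutFlow G s t (φf s t) (hflow s t hst) T hs
          (Finset.mem_compl.mp ht)
        simpa [hg_def, hF_def, hst] using this
      have step2 : (k : ℚ) * m ≤ ∑ s ∈ T, ∑ t ∈ Tᶜ, g s t := by
        calc (k : ℚ) * m = ∑ _s ∈ T, (m : ℚ) := by simp [hk_def, mul_comm]
          _ ≤ ∑ s ∈ T, ∑ t ∈ Tᶜ, g s t := Finset.sum_le_sum step1
      have step3 : ∑ s ∈ T, ∑ t ∈ Tᶜ, g s t ≤ ∑ s : V, ∑ t : V, g s t := by
        calc ∑ s ∈ T, ∑ t ∈ Tᶜ, g s t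
            ≤ ∑ s ∈ T, ∑ t : V, g s t :=
              Finset.sum_le_sum fun s _ =>
                Finset.sum_le_sum_of_subset_of_nonneg (Finset.subset_univ _)
                  (fun t _ _ => hgnonneg s t)
          _ ≤ ∑ s : V, ∑ t : V, g s t :=
              Finset.sum_le_sum_of_subset_of_nonneg (Finset.subset_univ _)
                (fun s _ _ => Finset.sum_nonneg fun t _ => hgnonneg s t)
      linarith
    -- upper bound via cutCard
    set C : Finset (V × V) :=
      Finset.univ.filter (fun p : V × V => p.1 ∈ T ∧ p.2 ∉ T ∧ G.Adj p.1 p.2)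
      with hC_def
    have hcut : cutCard G S = C.card := by
      rw [cutCard, Set.ncard_eq_toFinset_card']
      congr 1
      ext p
      simp [hC_def, hT_def, Set.mem_toFinset]
    have hΦzero : ∀ p : V × V, ¬ G.Adj p.1 p.2 → Φ p = 0 := by
      intro p hadj
      refine Finset.sum_eq_zero fun s _ => Finset.sum_eq_zero fun t _ => ?_
      by_cases hst : s = t
      · simp [hst]
      · simp only [hst, if_neg, if_false]
        exact (hflow s t hst).2.1 p hadj
    have hhigh : ∑ u ∈ T, ∑ v ∈ Tᶜ, Φ (u, v) ≤ (cutCard G S : ℚ) * φmax := by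
      have hprod : ∑ u ∈ T, ∑ v ∈ Tᶜ, Φ (u, v) = ∑ p ∈ T ×ˢ Tᶜ, Φ p := by
        rw [Finset.sum_product]
      have hCsub : C ⊆ T ×ˢ Tᶜ := by
        intro p hp
        simp only [hC_def, Finset.mem_filter, Finset.mem_univ, true_and] at hp
        exact Finset.mem_product.mpr ⟨hp.1, Finset.mem_compl.mpr hp.2.1⟩
      have hzero : ∀ p ∈ T ×ˢ Tᶜ, p ∉ C → Φ p = 0 := by
        intro p hp hpc
        rw [Finset.mem_product] at hp
        by_cases hadj : G.Adj p.1 p.2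
        · exact absurd (by
            simp only [hC_def, Finset.mem_filter, Finset.mem_univ, true_and]
            exact ⟨hp.1, Finset.mem_compl.mp hp.2, hadj⟩) hpc
        · exact hΦzero p hadj
      have heq : ∑ p ∈ T ×ˢ Tᶜ, Φ p = ∑ p ∈ C, Φ p :=
        (Finset.sum_subset hCsub hzero).symm
      have hle : ∑ p ∈ C, Φ p ≤ ∑ _p ∈ C, φmax := by
        refine Finset.sum_le_sum fun p hp => ?_
        simp only [hC_def, Finset.mem_filter, Finset.mem_univ, true_and] at hp
        exact hub p hp.2.2
      rw [hprod, heq, hcut]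
      simpa using hle
    -- combine, in ℚ
    have hq : (n : ℚ) * k ≤ (cutCard G S : ℚ) * (2 * φmax) := by
      have h1 : (n : ℚ) ≤ 2 * m := by exact_mod_cast hnm
      have h2 : (0 : ℚ) ≤ k := Nat.cast_nonneg k
      nlinarith [hlow, hhigh]
    -- pass to ℝ
    rw [div_le_div_iff₀ (by positivity) (by
      rw [hTcard]; exact_mod_cast hkpos)]
    have hr : ((n : ℚ) * k : ℚ) ≤ ((cutCard G S : ℚ) * (2 * φmax) : ℚ) := hq
    have := (Rat.cast_le (K := ℝ)).mpr hr
    push_cast at this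
    rw [hTcard]
    push_cast
    linarith
end
end

section
/- If P ⊆ ℝ^d is a 0/1-polytope with at least two vertices that has fractional wall-matchings, then h(G(P)) ≥ 1. -/
open scoped Classical

noncomputable section

/-- All points of `X` are 0/1-vectors. -/
def IsZeroOne {ι : Type*} (X : Finset (ι → ℝ)) : Prop :=
  ∀ x ∈ X, ∀ i, x i = 0 ∨ x i = 1

/-- Two vertices `u v` of the 0/1-polytope `P = conv X` are adjacent iff they are
distinct and there is a linear functional whose maximum over `P` is attained
exactly on the segment `[u, v]`. -/
def PolytopeAdj {ι : Type*} [Fintype ι] (X : Finset (ι → ℝ)) (u v : ι → ℝ) : Prop :=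
  u ∈ X ∧ v ∈ X ∧ u ≠ v ∧ ∃ (f : (ι → ℝ) →ₗ[ℝ] ℝ) (c : ℝ),
    (∀ x ∈ convexHull ℝ (X : Set (ι → ℝ)), f x ≤ c) ∧
    {x ∈ convexHull ℝ (X : Set (ι → ℝ)) | f x = c} = segment ℝ u v

/-- The graph `G(P)` of the 0/1-polytope `P = conv X`, on the vertex set `X`. -/
def polytopeGraph {ι : Type*} [Fintype ι] (X : Finset (ι → ℝ)) :
    SimpleGraph {x // x ∈ X} where
  Adj u v := PolytopeAdj X u.1 v.1
  symm := by
    constructor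
    rintro u v ⟨hu, hv, hne, f, c, h1, h2⟩
    exact ⟨hv, hu, hne.symm, f, c, h1, by rw [h2, segment_symm]⟩
  loopless := by constructor; rintro u ⟨_, _, hne, _⟩; exact hne rfl
/-- A wall of the 0/1-polytope with vertex set `X`: a nonempty set of vertices
obtained by intersecting `X` with a face of the 0/1-cube, given by a sign vector
`σ ∈ {0,1,⋆}^ι` (encoded as `ι → Option Bool`, `none` being `⋆`). -/
def IsWall {ι : Type*} (X : Finset (ι → ℝ)) (W : Set (ι → ℝ)) : Prop :=
  W.Nonempty ∧ ∃ σ : ι → Option Bool,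
    W = {x | x ∈ X ∧ ∀ i, ∀ b, σ i = some b → x i = (if b then (1 : ℝ) else 0)}

/-- `σ(W)ᵢ = ⋆`, i.e. the points of `W` do not all agree in coordinate `i`. -/
def IsStarCoord {ι : Type*} (W : Set (ι → ℝ)) (i : ι) : Prop :=
  ∃ x ∈ W, ∃ y ∈ W, x i ≠ y i
/-- `μ` is the smallest coordinate in which the points of `W` disagree,
i.e. `μ = μ(W)`. -/
def IsLeastStar {ι : Type*} [LinearOrder ι] (W : Set (ι → ℝ)) (μ : ι) : Prop :=
  IsStarCoord W μ ∧ ∀ j, j < μ → ¬ IsStarCoord W j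

/-- `(u, v)` is an edge of the bipartite graph `B(W)` (with `μ = μ(W)`),
oriented from the part `W₀` to the part `W₁`. -/
def WallBipAdj {ι : Type*} [Fintype ι] (X : Finset (ι → ℝ)) (W : Set (ι → ℝ))
    (μ : ι) (u v : ι → ℝ) : Prop :=
  PolytopeAdj X u v ∧ u ∈ W ∧ v ∈ W ∧ u μ = 0 ∧ v μ = 1

/-- The bipartite graph `B(W)` (with `μ = μ(W)`, parts `W₀` and `W₁`) has a
fractional matching: nonnegative weights on its edges such that every node of
`W₀` has weighted degree `1/|W₀|` and every node of `W₁` has weighted degree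
`1/|W₁|`. -/
def HasFracMatching {ι : Type*} [Fintype ι] (X : Finset (ι → ℝ)) (W : Set (ι → ℝ))
    (μ : ι) : Prop :=
  ∃ w : (ι → ℝ) → (ι → ℝ) → ℚ,
    (∀ u v, 0 ≤ w u v) ∧
    (∀ u v, w u v ≠ 0 → WallBipAdj X W μ u v) ∧
    (∀ u ∈ W, u μ = 0 → ∑ v ∈ X, w u v = 1 / ({x ∈ W | x μ = 0}.ncard : ℚ)) ∧
    (∀ v ∈ W, v μ = 1 → ∑ u ∈ X, w u v = 1 / ({x ∈ W | x μ = 1}.ncard : ℚ))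

/-- The 0/1-polytope with vertex set `X` has fractional wall-matchings: for every
wall `W` with at least two points (equivalently, with a least star coordinate
`μ(W)`), the bipartite graph `B(W)` has a fractional matching. -/
def HasFractionalWallMatchings {ι : Type*} [Fintype ι] [LinearOrder ι]
    (X : Finset (ι → ℝ)) : Prop :=
  ∀ W : Set (ι → ℝ), IsWall X W → ∀ μ : ι, IsLeastStar W μ → HasFracMatching X W μ

/-! By induction on walls, every wall `W` expands within itself: each `S ⊆ W` with
`2|S| ≤ |W|` sends at least `|S|` edges of `G(P)` into `W \ S` (for `W = vert P` this is
`h(G(P)) ≥ 1`). Split `W` along `μ(W)` into the subwalls `W₀, W₁`, and `S` into `A ⊆ W₀`,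
`B ⊆ W₁`. Induction inside the subwalls gives `min(|A|, |W₀ \ A|) + min(|B|, |W₁ \ B|)` cut
edges. A fractional matching of `B(W)` has weights at most `1 / max(|W₀|, |W₁|)` and carries
mass at least `|A|/|W₀| - |B|/|W₁|` from `A` to `W₁ \ B` (symmetrically from `B` to `W₀ \ A`),
which pays for the missing edges when `A` or `B` is more than half of its subwall. -/

theorem sub_le_div_sub_div_mul_max {a a' b b' : ℚ} (hL : 0 < a + a') (hR : 0 < b + b')
    (hb : b' ≤ b) (hab : a + b ≤ a' + b') :
    b - b' ≤ (b / (b + b') - a / (a + a')) * max (b + b') (a + a') := by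
  have hM : 2 * ((a + a') * (b + b')) ≤ (a + a' + (b + b')) * max (b + b') (a + a') := by
    nlinarith [le_max_left (b + b') (a + a'), le_max_right (b + b') (a + a')]
  have hcross : (a + a' + (b + b')) * (b - b') ≤ 2 * (b * (a + a') - a * (b + b')) := by
    nlinarith [mul_le_mul_of_nonneg_right hab hR.le]
  rw [div_sub_div _ _ hR.ne' hL.ne', div_mul_eq_mul_div, le_div_iff₀ (mul_pos hR hL)]
  nlinarith [mul_le_mul_of_nonneg_left hM (sub_nonneg.2 hb),
    mul_le_mul_of_nonneg_right hcross (hR.le.trans (le_max_left (b + b') (a + a')))]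

theorem add_le_min_add_min_add_add {a a' b b' e e' : ℚ} (hL : 0 < a + a') (hR : 0 < b + b')
    (hab : a + b ≤ a' + b') (he : 0 ≤ e) (he' : 0 ≤ e')
    (hAB : (a / (a + a') - b / (b + b')) * max (a + a') (b + b') ≤ e)
    (hBA : (b / (b + b') - a / (a + a')) * max (b + b') (a + a') ≤ e') :
    a + b ≤ min a a' + min b b' + (e + e') := by
  rcases le_total a a' with ha | ha <;> rcases le_total b b' with hb | hb
  · rw [min_eq_left ha, min_eq_left hb]; linarith
  · rw [min_eq_left ha, min_eq_right hb]
    linarith [sub_le_div_sub_div_mul_max hL hR hb hab]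
  · rw [min_eq_right ha, min_eq_left hb]
    linarith [sub_le_div_sub_div_mul_max hR hL ha (by linarith)]
  · rw [min_eq_right ha, min_eq_right hb]; linarith

namespace SimpleGraph

open Finset

variable {V : Type*} (G : SimpleGraph V)

theorem card_interedges_union_left [DecidableEq V] [DecidableRel G.Adj] {s₁ s₂ : Finset V}
    (h : Disjoint s₁ s₂) (t : Finset V) :
    #(G.interedges (s₁ ∪ s₂) t) = #(G.interedges s₁ t) + #(G.interedges s₂ t) := by
  rw [← card_union_of_disjoint (G.interedges_disjoint_left h t)]
  congr 1
  ext
  simp only [mem_interedges_iff, mem_union]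
  tauto

theorem card_interedges_union_right [DecidableEq V] [DecidableRel G.Adj] (s : Finset V)
    {t₁ t₂ : Finset V} (h : Disjoint t₁ t₂) :
    #(G.interedges s (t₁ ∪ t₂)) = #(G.interedges s t₁) + #(G.interedges s t₂) := by
  rw [← card_union_of_disjoint (G.interedges_disjoint_right s h)]
  congr 1
  ext
  simp only [mem_interedges_iff, mem_union]
  tauto

theorem card_interedges_union_union [DecidableEq V] [DecidableRel G.Adj] {s₁ s₂ t₁ t₂ : Finset V}
    (hs : Disjoint s₁ s₂) (ht : Disjoint t₁ t₂) :
    #(G.interedges (s₁ ∪ s₂) (t₁ ∪ t₂)) = #(G.interedges s₁ t₁) + #(G.interedges s₁ t₂)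
      + (#(G.interedges s₂ t₁) + #(G.interedges s₂ t₂)) := by
  rw [G.card_interedges_union_left hs, G.card_interedges_union_right _ ht,
    G.card_interedges_union_right _ ht]

theorem card_interedges_comm [DecidableRel G.Adj] (s t : Finset V) :
    #(G.interedges s t) = #(G.interedges t s) :=
  haveI := G.symm
  Rel.card_interedges_comm s t

def ExpandsWithin [DecidableEq V] [DecidableRel G.Adj] (W : Finset V) : Prop :=
  ∀ S ⊆ W, 2 * #S ≤ #W → #S ≤ #(G.interedges S (W \ S))

variable {G}

theorem expandsWithin_of_card_le_one [DecidableEq V] [DecidableRel G.Adj] {W : Finset V}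
    (hW : #W ≤ 1) : G.ExpandsWithin W := by
  intro S _ hS
  have : #S = 0 := by omega
  simp [this]

theorem ExpandsWithin.min_le [DecidableEq V] [DecidableRel G.Adj] {W A : Finset V}
    (h : G.ExpandsWithin W) (hA : A ⊆ W) :
    min #A #(W \ A) ≤ #(G.interedges A (W \ A)) := by
  have hcard : #(W \ A) + #A = #W := card_sdiff_add_card_eq_card hA
  rcases le_total (2 * #A) #W with hsmall | hlarge
  · exact (min_le_left _ _).trans (h A hA hsmall)
  · have hcompl := h (W \ A) sdiff_subset (by omega)
    rw [Finset.sdiff_sdiff_eq_self hA, card_interedges_comm] at hcompl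
    exact (min_le_right _ _).trans hcompl

structure IsFractionalMatching (L R : Finset V) (w : V → V → ℚ) : Prop where
  nonneg : ∀ u v, 0 ≤ w u v
  support : ∀ u v, w u v ≠ 0 → u ∈ L ∧ v ∈ R ∧ G.Adj u v
  sum_left : ∀ u ∈ L, ∑ v ∈ R, w u v = 1 / #L
  sum_right : ∀ v ∈ R, ∑ u ∈ L, w u v = 1 / #R

namespace IsFractionalMatching

variable {L R : Finset V} {w : V → V → ℚ}

theorem swap (hw : G.IsFractionalMatching L R w) :
    G.IsFractionalMatching R L (fun v u ↦ w u v) where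
  nonneg v u := hw.nonneg u v
  support v u h := by
    obtain ⟨hu, hv, hadj⟩ := hw.support u v h
    exact ⟨hv, hu, hadj.symm⟩
  sum_left := hw.sum_right
  sum_right := hw.sum_left

theorem mul_max_card_le_one (hw : G.IsFractionalMatching L R w) (u v : V) :
    w u v * max #L #R ≤ 1 := by
  by_cases h0 : w u v = 0
  · simp [h0]
  obtain ⟨hu, hv, -⟩ := hw.support u v h0
  have hleL : w u v ≤ 1 / #L :=
    hw.sum_left u hu ▸ single_le_sum (fun v' _ ↦ hw.nonneg u v') hv
  have hleR : w u v ≤ 1 / #R :=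
    hw.sum_right v hv ▸ single_le_sum (fun u' _ ↦ hw.nonneg u' v) hu
  have hL : (0 : ℚ) < #L := by exact_mod_cast card_pos.2 ⟨u, hu⟩
  have hR : (0 : ℚ) < #R := by exact_mod_cast card_pos.2 ⟨v, hv⟩
  rcases max_choice (#L : ℚ) #R with hmax | hmax <;> rw [Nat.cast_max, hmax]
  · exact (le_div_iff₀ hL).1 (by simpa using hleL)
  · exact (le_div_iff₀ hR).1 (by simpa using hleR)

theorem sub_mul_max_le_card_interedges [DecidableEq V] [DecidableRel G.Adj]
    (hw : G.IsFractionalMatching L R w) {A B : Finset V} (hA : A ⊆ L) (hB : B ⊆ R) :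
    ((#A : ℚ) / #L - (#B : ℚ) / #R) * max #L #R ≤ #(G.interedges A (R \ B)) := by
  have hout : ∑ u ∈ A, ∑ v ∈ R, w u v = #A / #L := by
    rw [sum_congr rfl fun u hu ↦ hw.sum_left u (hA hu), sum_const, nsmul_eq_mul, mul_one_div]
  have hin : ∑ u ∈ A, ∑ v ∈ B, w u v ≤ #B / #R := by
    rw [sum_comm]
    calc ∑ v ∈ B, ∑ u ∈ A, w u v ≤ ∑ v ∈ B, ∑ u ∈ L, w u v :=
          sum_le_sum fun v _ ↦ sum_le_sum_of_subset_of_nonneg hA fun u _ _ ↦ hw.nonneg u v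
      _ = #B / #R := by
          rw [sum_congr rfl fun v hv ↦ hw.sum_right v (hB hv), sum_const, nsmul_eq_mul,
            mul_one_div]
  have hmass : (#A : ℚ) / #L - (#B : ℚ) / #R ≤ ∑ p ∈ G.interedges A (R \ B), w p.1 p.2 := by
    have hsplit : ∑ u ∈ A, ∑ v ∈ R, w u v
        = ∑ u ∈ A, ∑ v ∈ R \ B, w u v + ∑ u ∈ A, ∑ v ∈ B, w u v := by
      rw [← sum_add_distrib]
      exact sum_congr rfl fun u _ ↦ (sum_sdiff hB).symm
    rw [interedges_def, sum_filter_of_ne fun p _ h ↦ (hw.support p.1 p.2 h).2.2, sum_product']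
    linarith
  calc ((#A : ℚ) / #L - (#B : ℚ) / #R) * max #L #R
      ≤ (∑ p ∈ G.interedges A (R \ B), w p.1 p.2) * max #L #R := by gcongr
    _ = ∑ p ∈ G.interedges A (R \ B), w p.1 p.2 * max #L #R := sum_mul ..
    _ ≤ ∑ _p ∈ G.interedges A (R \ B), (1 : ℚ) := sum_le_sum fun p _ ↦ hw.mul_max_card_le_one ..
    _ = #(G.interedges A (R \ B)) := by simp

end IsFractionalMatching

theorem ExpandsWithin.union [DecidableEq V] [DecidableRel G.Adj] {L R : Finset V}
    {w : V → V → ℚ} (hdisj : Disjoint L R) (hL : G.ExpandsWithin L) (hR : G.ExpandsWithin R)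
    (hw : G.IsFractionalMatching L R w) (hLne : L.Nonempty) (hRne : R.Nonempty) :
    G.ExpandsWithin (L ∪ R) := by
  intro S hS hS2
  have hSLR : L ∩ S ∪ R ∩ S = S := by rw [← union_inter_distrib_right, inter_eq_right.2 hS]
  have hdisjS : Disjoint (L ∩ S) (R ∩ S) := hdisj.mono inter_subset_left inter_subset_left
  have hcut : #(G.interedges S ((L ∪ R) \ S)) = #(G.interedges (L ∩ S) (L \ S))
      + #(G.interedges (L ∩ S) (R \ S)) + (#(G.interedges (R ∩ S) (L \ S))
      + #(G.interedges (R ∩ S) (R \ S))) := by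
    rw [union_sdiff_distrib, ← G.card_interedges_union_union hdisjS
      (hdisj.mono sdiff_subset sdiff_subset), hSLR]
  have hScard : #(L ∩ S) + #(R ∩ S) = #S := by rw [← card_union_of_disjoint hdisjS, hSLR]
  have hLcard : #(L ∩ S) + #(L \ S) = #L := card_inter_add_card_sdiff L S
  have hRcard : #(R ∩ S) + #(R \ S) = #R := card_inter_add_card_sdiff R S
  have hLR : #(L ∪ R) = #L + #R := card_union_of_disjoint hdisj
  have hinL := hL.min_le (inter_subset_left (s₂ := S))
  have hinR := hR.min_le (inter_subset_left (s₂ := S))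
  have hcrossL := hw.sub_mul_max_le_card_interedges (inter_subset_left (s₂ := S))
    (inter_subset_left (s₂ := S))
  have hcrossR := hw.swap.sub_mul_max_le_card_interedges (inter_subset_left (s₂ := S))
    (inter_subset_left (s₂ := S))
  simp only [sdiff_inter_self_left] at hinL hinR hcrossL hcrossR
  rw [← hLcard, ← hRcard] at hcrossL hcrossR
  push_cast at hcrossL hcrossR
  have hLpos : (0 : ℚ) < #(L ∩ S) + #(L \ S) := by exact_mod_cast hLcard ▸ hLne.card_pos
  have hRpos : (0 : ℚ) < #(R ∩ S) + #(R \ S) := by exact_mod_cast hRcard ▸ hRne.card_pos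
  have hhalf : (#(L ∩ S) + #(R ∩ S) : ℚ) ≤ #(L \ S) + #(R \ S) := by
    exact_mod_cast (by omega : #(L ∩ S) + #(R ∩ S) ≤ #(L \ S) + #(R \ S))
  have key := add_le_min_add_min_add_add hLpos hRpos hhalf (Nat.cast_nonneg _) (Nat.cast_nonneg _)
    hcrossL hcrossR
  rw [← hScard, hcut]
  qify at hinL hinR ⊢
  linarith

end SimpleGraph

section ZeroOnePolytope

open Finset

variable {ι : Type*} {X : Finset (ι → ℝ)}

theorem polytopeAdj_symm [Fintype ι] {u v : ι → ℝ} (h : PolytopeAdj X u v) :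
    PolytopeAdj X v u := by
  obtain ⟨hu, hv, hne, f, c, hmax, hface⟩ := h
  exact ⟨hv, hu, hne.symm, f, c, hmax, by rw [hface, segment_symm]⟩

variable (X) in
/-- The graph `G(conv X)` with vertex set enlarged to all of `ι → ℝ`, points outside `X` being
isolated; this lets walls and their subsets be plain finsets of points. -/
def oneSkeleton [Fintype ι] : SimpleGraph (ι → ℝ) where
  Adj := PolytopeAdj X
  symm := ⟨fun _ _ ↦ polytopeAdj_symm⟩
  loopless := ⟨fun _ h ↦ h.2.2.1 rfl⟩

theorem isWall_coe_self (hX : X.Nonempty) : IsWall X ↑X :=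
  ⟨hX, fun _ ↦ none, by ext; simp⟩

theorem IsWall.subset {W : Set (ι → ℝ)} (hW : IsWall X W) : W ⊆ X := by
  obtain ⟨-, σ, rfl⟩ := hW
  exact fun x hx ↦ hx.1

theorem exists_isLeastStar [LinearOrder ι] [WellFoundedLT ι] {W : Set (ι → ℝ)} {x y : ι → ℝ}
    (hx : x ∈ W) (hy : y ∈ W) (hxy : x ≠ y) : ∃ μ, IsLeastStar W μ := by
  obtain ⟨i, hi⟩ := Function.ne_iff.1 hxy
  obtain ⟨μ, hμ, hmin⟩ := wellFounded_lt.has_min {j | IsStarCoord W j} ⟨i, x, hx, y, hy, hi⟩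
  exact ⟨μ, hμ, fun j hj hjμ ↦ hmin j hjμ hj⟩

theorem exists_coord_eq_zero_and_one (hX01 : IsZeroOne X) {W : Set (ι → ℝ)} (hWX : W ⊆ X)
    {μ : ι} (hμ : IsStarCoord W μ) : (∃ x ∈ W, x μ = 0) ∧ ∃ x ∈ W, x μ = 1 := by
  obtain ⟨x, hx, y, hy, hxy⟩ := hμ
  rcases hX01 x (hWX hx) μ with hx0 | hx1 <;> rcases hX01 y (hWX hy) μ with hy0 | hy1
  · exact absurd (hx0.trans hy0.symm) hxy
  · exact ⟨⟨x, hx, hx0⟩, y, hy, hy1⟩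
  · exact ⟨⟨y, hy, hy0⟩, x, hx, hx1⟩
  · exact absurd (hx1.trans hy1.symm) hxy

theorem IsWall.sep_coord_eq {W : Set (ι → ℝ)} (hW : IsWall X W) {μ : ι}
    (hμ : IsStarCoord W μ) (b : Bool) (hne : ∃ x ∈ W, x μ = if b then 1 else 0) :
    IsWall X {x ∈ W | x μ = if b then 1 else 0} := by
  obtain ⟨-, σ, rfl⟩ := hW
  have hσμ : σ μ = none := by
    obtain ⟨x, hx, y, hy, hxy⟩ := hμ
    by_contra h
    obtain ⟨c, hc⟩ := Option.ne_none_iff_exists'.1 h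
    exact hxy ((hx.2 μ c hc).trans (hy.2 μ c hc).symm)
  refine ⟨hne, Function.update σ μ (some b), ?_⟩
  ext x
  simp only [Set.mem_ofPred_eq]
  constructor
  · rintro ⟨⟨hxX, hxσ⟩, hxμ⟩
    refine ⟨hxX, fun i c hc ↦ ?_⟩
    rcases eq_or_ne i μ with rfl | hiμ
    · rw [Function.update_self, Option.some_inj] at hc
      rwa [← hc]
    · exact hxσ i c (by rwa [Function.update_of_ne hiμ] at hc)
  · rintro ⟨hxX, hx⟩
    refine ⟨⟨hxX, fun i c hc ↦ hx i c ?_⟩, hx μ b (Function.update_self ..)⟩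
    rwa [Function.update_of_ne (by rintro rfl; simp [hσμ] at hc)]

theorem HasFracMatching.exists_isFractionalMatching [Fintype ι] {W : Finset (ι → ℝ)} {μ : ι}
    (h : HasFracMatching X ↑W μ) (hWX : W ⊆ X) :
    ∃ w, (oneSkeleton X).IsFractionalMatching {x ∈ W | x μ = 0} {x ∈ W | x μ = 1} w := by
  obtain ⟨w, hpos, hsupp, hrow, hcol⟩ := h
  have hsupp' : ∀ u v, w u v ≠ 0 →
      u ∈ {x ∈ W | x μ = 0} ∧ v ∈ {x ∈ W | x μ = 1} ∧ (oneSkeleton X).Adj u v := by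
    intro u v huv
    obtain ⟨hadj, hu, hv, hu0, hv1⟩ := hsupp u v huv
    exact ⟨mem_filter.2 ⟨hu, hu0⟩, mem_filter.2 ⟨hv, hv1⟩, hadj⟩
  refine ⟨w, hpos, hsupp', fun u hu ↦ ?_, fun v hv ↦ ?_⟩
  · rw [mem_filter] at hu
    rw [sum_subset ((filter_subset _ _).trans hWX)
      fun v _ hv ↦ by_contra fun h ↦ hv (hsupp' u v h).2.1]
    simpa [← coe_filter, Set.ncard_coe_finset] using hrow u hu.1 hu.2
  · rw [mem_filter] at hv
    rw [sum_subset ((filter_subset _ _).trans hWX)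
      fun u _ hu ↦ by_contra fun h ↦ hu (hsupp' u v h).1]
    simpa [← coe_filter, Set.ncard_coe_finset] using hcol v hv.1 hv.2

theorem expandsWithin_of_isWall [Fintype ι] [LinearOrder ι] (hX01 : IsZeroOne X)
    (hfwm : HasFractionalWallMatchings X) {W : Finset (ι → ℝ)} (hW : IsWall X ↑W) :
    (oneSkeleton X).ExpandsWithin W := by
  induction hn : #W using Nat.strong_induction_on generalizing W with
  | _ n ih =>
  subst hn
  rcases le_or_gt #W 1 with hle | hlt
  · exact SimpleGraph.expandsWithin_of_card_le_one hle
  obtain ⟨x, hx, y, hy, hxy⟩ := one_lt_card.1 hlt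
  obtain ⟨μ, hμ⟩ := exists_isLeastStar (mem_coe.2 hx) (mem_coe.2 hy) hxy
  have hWX : W ⊆ X := by exact_mod_cast hW.subset
  obtain ⟨⟨x₀, hx₀, hx₀μ⟩, ⟨x₁, hx₁, hx₁μ⟩⟩ := exists_coord_eq_zero_and_one hX01 hW.subset hμ.1
  have hW₀ : IsWall X ↑{x ∈ W | x μ = 0} := by
    simpa using hW.sep_coord_eq hμ.1 false ⟨x₀, hx₀, by simpa using hx₀μ⟩
  have hW₁ : IsWall X ↑{x ∈ W | x μ = 1} := by
    simpa using hW.sep_coord_eq hμ.1 true ⟨x₁, hx₁, by simpa using hx₁μ⟩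
  have hdisj : Disjoint {x ∈ W | x μ = 0} {x ∈ W | x μ = 1} :=
    disjoint_filter.2 fun _ _ h₀ h₁ ↦ zero_ne_one (h₀.symm.trans h₁)
  have hsplit : {x ∈ W | x μ = 0} ∪ {x ∈ W | x μ = 1} = W := by
    rw [← filter_or]
    exact filter_true_of_mem fun x hx ↦ hX01 x (hWX hx) μ
  have hW₀ne : ({x ∈ W | x μ = 0}).Nonempty := ⟨x₀, mem_filter.2 ⟨hx₀, hx₀μ⟩⟩
  have hW₁ne : ({x ∈ W | x μ = 1}).Nonempty := ⟨x₁, mem_filter.2 ⟨hx₁, hx₁μ⟩⟩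
  have hcard := card_union_of_disjoint hdisj
  rw [hsplit] at hcard
  have h₀ := hW₀ne.card_pos
  have h₁ := hW₁ne.card_pos
  obtain ⟨w, hw⟩ := (hfwm ↑W hW μ hμ).exists_isFractionalMatching hWX
  rw [← hsplit]
  exact (ih _ (by omega) hW₀ rfl).union hdisj (ih _ (by omega) hW₁ rfl) hw hW₀ne hW₁ne

theorem cutCard_polytopeGraph [Fintype ι] (S : Set {x // x ∈ X}) :
    cutCard (polytopeGraph X) S = #((oneSkeleton X).interedges
      (S.toFinset.map (.subtype _)) (X \ S.toFinset.map (.subtype _))) := by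
  rw [cutCard, ← Set.ncard_coe_finset]
  refine Set.ncard_congr (fun p _ ↦ (p.1.1, p.2.1)) ?_ ?_ ?_
  · rintro ⟨u, v⟩ ⟨hu, hv, hadj⟩
    rw [mem_coe, SimpleGraph.mem_interedges_iff]
    refine ⟨mem_map_of_mem _ (Set.mem_toFinset.2 hu), mem_sdiff.2 ⟨v.2, fun h ↦ hv ?_⟩, hadj⟩
    exact Set.mem_toFinset.1 ((mem_map' _).1 h)
  · intro p q _ _ h
    obtain ⟨h₁, h₂⟩ := Prod.ext_iff.1 h
    exact Prod.ext (Subtype.ext h₁) (Subtype.ext h₂)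
  · rintro ⟨u, v⟩ hp
    rw [mem_coe, SimpleGraph.mem_interedges_iff, mem_sdiff, mem_map] at hp
    obtain ⟨⟨u, hu, rfl⟩, ⟨hvX, hvS⟩, hadj⟩ := hp
    refine ⟨(u, ⟨v, hvX⟩), ⟨Set.mem_toFinset.1 hu, fun h ↦ hvS ?_, hadj⟩, rfl⟩
    exact mem_map_of_mem _ (Set.mem_toFinset.2 h)

end ZeroOnePolytope

theorem one_le_edgeExpansion {V : Type*} [Fintype V] (G : SimpleGraph V)
    (hV : 2 ≤ Fintype.card V)
    (h : ∀ S : Set V, 2 * S.ncard ≤ Fintype.card V → S.ncard ≤ cutCard G S) :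
    1 ≤ edgeExpansion G := by
  obtain ⟨v⟩ : Nonempty V := Fintype.card_pos_iff.1 (by omega)
  refine le_csInf ⟨_, {v}, Set.singleton_nonempty v, by simpa using hV, rfl⟩ ?_
  rintro r ⟨S, hS, hS2, rfl⟩
  rw [le_div_iff₀ (by exact_mod_cast (Set.ncard_pos S.toFinite).2 hS), one_mul]
  exact_mod_cast h S hS2

/-- If `P ⊆ ℝ^d` is a 0/1-polytope with at least two vertices
that has fractional wall-matchings, then `h(G(P)) ≥ 1`. -/
theorem expansion_of_hasFractionalWallMatchings {d : ℕ} (X : Finset (Fin d → ℝ))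
    (hX01 : IsZeroOne X) (hcard : 2 ≤ X.card)
    (hfwm : HasFractionalWallMatchings X) :
    1 ≤ edgeExpansion (polytopeGraph X) := by
  have hX : IsWall X ↑X := isWall_coe_self (Finset.card_pos.1 (by omega))
  refine one_le_edgeExpansion _ (by simpa using hcard) fun S hS ↦ ?_
  rw [cutCard_polytopeGraph, Set.ncard_eq_toFinset_card', ← Finset.card_map (.subtype _)]
  refine expandsWithin_of_isWall hX01 hfwm hX _ (Finset.map_subtype_subset _) ?_
  rwa [Finset.card_map, ← Set.ncard_eq_toFinset_card', ← Fintype.card_coe]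
end
end

section
/- Every balanced, ρ-uniform 0/1-polytope P ⊆ ℝ^d has fractional wall-matchings. -/
open scoped Classical

noncomputable section

/-- `P = conv X` is `ρ`-uniform: every vertex has exactly `ρ` coordinates equal
to one. -/
def IsUniform {ι : Type*} (X : Finset (ι → ℝ)) (ρ : ℕ) : Prop :=
  ∀ x ∈ X, {i : ι | x i = 1}.ncard = ρ

/-- `P = conv X` is balanced: for every wall `W` and all distinct star
coordinates `i, j` of `W` one has `|W₀₀|·|W₁₁| ≤ |W₁₀|·|W₀₁|`. -/
def IsBalancedPolytope {ι : Type*} (X : Finset (ι → ℝ)) : Prop :=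
  ∀ W : Set (ι → ℝ), IsWall X W → ∀ i j : ι, i ≠ j →
    IsStarCoord W i → IsStarCoord W j →
    {w ∈ W | w i = 0 ∧ w j = 0}.ncard * {w ∈ W | w i = 1 ∧ w j = 1}.ncard ≤
      {w ∈ W | w i = 1 ∧ w j = 0}.ncard * {w ∈ W | w i = 0 ∧ w j = 1}.ncard


/-!
Fix a wall `W` and a coordinate `μ` in which it is not constant. Call `(u, v) ∈ W₀ × W₁` an
exchange if `v` arises from `u` by moving a single one onto `μ`. By uniformity every exchange is an
edge of `P`: it is the face on which the functional measuring agreement with `u` outside the two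
moved coordinates is maximal. Blowing up each point of `W₀` into `|W₁|` copies and each point of
`W₁` into `|W₀|` copies, a perfect matching of exchanges yields the fractional matching, so by
Hall's theorem it suffices to show `|W₁| |A| ≤ |W₀| |N(A)|` for all `A ⊆ W₀`. This goes by
induction on `|W|`. If `W₀ = {u}`, balance forbids a coordinate where some `v ∈ W₁` has a one and
`u` has none, so every `v ∈ W₁` is an exchange of `u`. Otherwise suppose `A` violates the
inequality. For every coordinate `f` that splits `W₀`, the induction hypothesis on the subwalls
`x_f = 0` and `x_f = 1`, combined with the balance inequality for `(μ, f)`, shows that `A` has a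
strictly larger proportion of points with `x_f = 1` than `W₀`; for the other coordinates the
proportions agree. But by `ρ`-uniformity both proportions sum to `ρ` over all coordinates.
-/

open Finset Function

section ProportionalHall

variable {α β : Type*}

lemma ncard_sep_coe (S : Finset α) (p : α → Prop) [DecidablePred p] :
    {x ∈ (S : Set α) | p x}.ncard = #{x ∈ S | p x} := by
  rw [← Set.ncard_coe_finset, coe_filter]
  rfl

def neighbors (r : α → β → Prop) (A : Finset α) (R : Finset β) : Finset β :=
  {v ∈ R | ∃ u ∈ A, r u v}

lemma neighbors_subset {r : α → β → Prop} {A : Finset α} {R : Finset β} :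
    neighbors r A R ⊆ R :=
  filter_subset _ _

/-- Hall's condition for the blow-up of `r` in which every node of `L` is copied `#R` times and
every node of `R` is copied `#L` times. -/
def ProportionalHall (r : α → β → Prop) (L : Finset α) (R : Finset β) : Prop :=
  ∀ A ⊆ L, #R * #A ≤ #L * #(neighbors r A R)

lemma card_filter_fst_val_eq {S : Finset α} {n : ℕ} {s : α} (hs : s ∈ S) :
    #{x : S × Fin n | x.1.1 = s} = n := by
  calc #{x : S × Fin n | x.1.1 = s} = #(({⟨s, hs⟩} : Finset S) ×ˢ (univ : Finset (Fin n))) := by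
        congr 1; ext ⟨⟨u, hu⟩, k⟩; simp [Subtype.ext_iff, eq_comm]
    _ = n := by simp

theorem ProportionalHall.exists_equiv {r : α → β → Prop} {L : Finset α} {R : Finset β}
    (h : ProportionalHall r L R) : ∃ e : L × Fin #R ≃ R × Fin #L, ∀ x, r x.1 (e x).1 := by
  set t : L × Fin #R → Finset (β × Fin #L) := fun x => {v ∈ R | r x.1 v} ×ˢ univ
  have hall : ∀ s : Finset (L × Fin #R), #s ≤ #(s.biUnion t) := by
    intro s
    set A := s.image fun x => (x.1 : α)
    have hA : A ⊆ L := by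
      intro u hu
      obtain ⟨x, -, rfl⟩ := mem_image.1 hu
      exact x.1.2
    have hs : #s ≤ #R * #A := card_le_mul_card_image _ _ fun u _ =>
      (card_le_card (filter_subset_filter _ (subset_univ s))).trans_eq
        (card_filter_fst_val_eq (hA ‹_›))
    have hU : s.biUnion t = neighbors r A R ×ˢ univ := by
      ext ⟨v, k⟩
      simp only [t, A, neighbors, mem_biUnion, mem_product, mem_filter, mem_univ, and_true,
        mem_image]
      constructor
      · rintro ⟨x, hx, hv, hr⟩
        exact ⟨hv, x.1, ⟨x, hx, rfl⟩, hr⟩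
      · rintro ⟨hv, _, ⟨x, hx, rfl⟩, hr⟩
        exact ⟨x, hx, hv, hr⟩
    calc #s ≤ #R * #A := hs
      _ ≤ #L * #(neighbors r A R) := h A hA
      _ = #(s.biUnion t) := by rw [hU, card_product, card_univ, Fintype.card_fin, mul_comm]
  obtain ⟨F, hFinj, hF⟩ := (all_card_le_biUnion_card_iff_exists_injective t).1 hall
  have hFt : ∀ x, (F x).1 ∈ R ∧ r x.1 (F x).1 := fun x => mem_filter.1 (mem_product.1 (hF x)).1
  set G : L × Fin #R → R × Fin #L := fun x => (⟨(F x).1, (hFt x).1⟩, (F x).2)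
  have hG : Bijective G := by
    refine (Fintype.bijective_iff_injective_and_card G).2 ⟨fun x y hxy => hFinj ?_, ?_⟩
    · simpa [G, Prod.ext_iff, Subtype.ext_iff] using hxy
    · simp [mul_comm]
  exact ⟨Equiv.ofBijective G hG, fun x => (hFt x).2⟩

theorem ProportionalHall.exists_biregular {r : α → β → Prop} {L : Finset α} {R : Finset β}
    (h : ProportionalHall r L R) :
    ∃ m : α → β → ℕ, (∀ u v, m u v ≠ 0 → u ∈ L ∧ v ∈ R ∧ r u v) ∧
      (∀ u ∈ L, ∑ v ∈ R, m u v = #R) ∧ (∀ v ∈ R, ∑ u ∈ L, m u v = #L) := by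
  obtain ⟨e, he⟩ := h.exists_equiv
  refine ⟨fun u v => #{x | x.1.1 = u ∧ (e x).1.1 = v}, fun u v huv => ?_, fun u hu => ?_,
    fun v hv => ?_⟩
  · obtain ⟨x, hx⟩ := card_ne_zero.1 huv
    obtain ⟨-, rfl, rfl⟩ := mem_filter.1 hx
    exact ⟨x.1.2, (e x).1.2, he x⟩
  · refine Eq.trans ?_ (card_filter_fst_val_eq (n := #R) hu)
    rw [card_eq_sum_card_fiberwise (fun x _ => (e x).1.2)]
    simp only [filter_filter]
  · refine Eq.trans ?_ (card_filter_fst_val_eq (n := #L) hv)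
    rw [← card_equiv e (s := {x | (e x).1.1 = v}) (by simp),
      card_eq_sum_card_fiberwise (s := {x | (e x).1.1 = v}) (f := fun x => x.1.1)
        (fun x _ => x.1.2)]
    simp only [filter_filter, and_comm]

end ProportionalHall

theorem sep_convexHull_eq_convexHull_filter {E : Type*} [AddCommGroup E] [Module ℝ E]
    {X : Finset E} (f : E →ₗ[ℝ] ℝ) {C : ℝ} (hle : ∀ x ∈ X, f x ≤ C) :
    {y ∈ convexHull ℝ (X : Set E) | f y = C} = convexHull ℝ ↑{x ∈ X | f x = C} := by
  apply subset_antisymm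
  · rintro _ ⟨hy, hfy⟩
    obtain ⟨w, hw0, hw1, rfl⟩ := Finset.mem_convexHull'.1 hy
    -- the average of the nonnegative gaps `C - f x` vanishes, so every weight off the face does
    have hgap : ∑ x ∈ X, w x * (C - f x) = 0 := by
      simp only [mul_sub, sum_sub_distrib, ← sum_mul, hw1, one_mul, ← hfy, map_sum, map_smul,
        smul_eq_mul, sub_self]
    have hw : ∀ x ∈ X, w x ≠ 0 → f x = C := fun x hx hwx => by
      have := (sum_eq_zero_iff_of_nonneg fun x hx =>
        mul_nonneg (hw0 x hx) (sub_nonneg.2 (hle x hx))).1 hgap x hx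
      linarith [(mul_eq_zero.1 this).resolve_left hwx]
    refine Finset.mem_convexHull'.2 ⟨w, fun x hx => hw0 x (mem_filter.1 hx).1, ?_, ?_⟩
    · rwa [sum_filter_of_ne hw]
    · exact sum_filter_of_ne fun x hx hwx => hw x hx fun h => hwx (by simp [h])
  · exact convexHull_min (fun x hx => ⟨subset_convexHull ℝ _ (mem_filter.1 hx).1,
      (mem_filter.1 hx).2⟩) ((convex_convexHull ℝ _).inter (convex_hyperplane f.isLinear C))

section Cube

variable {ι : Type*}

theorem polytopeAdj_of_forall_le [Fintype ι] {X : Finset (ι → ℝ)} {u v : ι → ℝ} (hu : u ∈ X)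
    (hv : v ∈ X) (huv : u ≠ v) (f : (ι → ℝ) →ₗ[ℝ] ℝ) (C : ℝ) (hle : ∀ x ∈ X, f x ≤ C)
    (heq : ∀ x ∈ X, f x = C ↔ x = u ∨ x = v) : PolytopeAdj X u v := by
  refine ⟨hu, hv, huv, f, C, fun y hy => convexHull_min hle (convex_halfSpace_le f.isLinear C) hy,
    ?_⟩
  have hface : {x ∈ X | f x = C} = {u, v} := by
    ext x
    simp only [mem_filter, mem_insert, mem_singleton]
    constructor
    · exact fun ⟨hx, hfx⟩ => (heq x hx).1 hfx
    · rintro (rfl | rfl)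
      exacts [⟨hu, (heq _ hu).2 (Or.inl rfl)⟩, ⟨hv, (heq _ hv).2 (Or.inr rfl)⟩]
  rw [sep_convexHull_eq_convexHull_filter f hle, hface, coe_pair, convexHull_pair]

lemma card_filter_eq_zero_add_card_filter_eq_one {S : Finset (ι → ℝ)} {f : ι}
    (hS : ∀ x ∈ S, x f = 0 ∨ x f = 1) : #{x ∈ S | x f = 0} + #{x ∈ S | x f = 1} = #S := by
  rw [← card_filter_add_card_filter_not (s := S) (fun x => x f = 0)]
  congr 2
  exact filter_congr fun x hx => by rcases hS x hx with h | h <;> simp [h]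

lemma filter_nonempty_of_ne {S : Finset (ι → ℝ)} {f : ι} (hS : ∀ x ∈ S, x f = 0 ∨ x f = 1)
    {x y : ι → ℝ} (hx : x ∈ S) (hy : y ∈ S) (hxy : x f ≠ y f) :
    {x ∈ S | x f = 0}.Nonempty ∧ {x ∈ S | x f = 1}.Nonempty := by
  rcases hS x hx with h | h <;> rcases hS y hy with h' | h'
  · exact absurd (h.trans h'.symm) hxy
  · exact ⟨⟨x, mem_filter.2 ⟨hx, h⟩⟩, ⟨y, mem_filter.2 ⟨hy, h'⟩⟩⟩
  · exact ⟨⟨y, mem_filter.2 ⟨hy, h'⟩⟩, ⟨x, mem_filter.2 ⟨hx, h⟩⟩⟩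
  · exact absurd (h.trans h'.symm) hxy

variable [Fintype ι] {X : Finset (ι → ℝ)} {ρ : ℕ}

lemma IsUniform.card_eq (huni : IsUniform X ρ) {x : ι → ℝ} (hx : x ∈ X) :
    #{i | x i = 1} = ρ := by
  rw [← huni x hx, ← Set.ncard_coe_finset, coe_filter]
  simp

lemma IsUniform.sum_eq (hX01 : IsZeroOne X) (huni : IsUniform X ρ) {x : ι → ℝ} (hx : x ∈ X) :
    ∑ i, x i = ρ := by
  rw [← huni.card_eq hx, natCast_card_filter]
  exact sum_congr rfl fun i _ => by rcases hX01 x hx i with h | h <;> simp [h]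

lemma IsUniform.sum_card_filter (huni : IsUniform X ρ) {S : Finset (ι → ℝ)} (hS : S ⊆ X) :
    ∑ f, #{x ∈ S | x f = 1} = ρ * #S := by
  simp_rw [card_filter]
  rw [sum_comm]
  simp_rw [← card_filter]
  rw [sum_congr rfl fun x hx => huni.card_eq (hS hx), sum_const, smul_eq_mul, mul_comm]

lemma IsUniform.add_eq_add_of_forall_ne (hX01 : IsZeroOne X) (huni : IsUniform X ρ) {x y : ι → ℝ}
    (hx : x ∈ X) (hy : y ∈ X) {c j : ι} (hjc : j ≠ c) (h : ∀ i, i ≠ c → i ≠ j → x i = y i) :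
    x c + x j = y c + y j := by
  have hsplit : ∀ z : ι → ℝ, ∑ i, z i = z c + z j + ∑ i ∈ (univ.erase c).erase j, z i :=
    fun z => by
      rw [← add_sum_erase _ _ (mem_univ c),
        ← add_sum_erase _ _ (mem_erase.2 ⟨hjc, mem_univ j⟩), add_assoc]
  have := (huni.sum_eq hX01 hx).trans (huni.sum_eq hX01 hy).symm
  rw [hsplit, hsplit y, sum_congr rfl fun i hi =>
    h i (ne_of_mem_erase (mem_of_mem_erase hi)) (ne_of_mem_erase hi)] at this
  linarith

end Cube

section Exchange

variable {ι : Type*}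

def IsExchange (c : ι) (u v : ι → ℝ) : Prop :=
  u c = 0 ∧ v c = 1 ∧ ∃ j, j ≠ c ∧ u j = 1 ∧ v j = 0 ∧ ∀ i, i ≠ c → i ≠ j → u i = v i

variable [Fintype ι] {X : Finset (ι → ℝ)} {ρ : ℕ} {c : ι} {u v : ι → ℝ}

theorem IsExchange.polytopeAdj (hX01 : IsZeroOne X) (huni : IsUniform X ρ) (hu : u ∈ X)
    (hv : v ∈ X) (h : IsExchange c u v) : PolytopeAdj X u v := by
  obtain ⟨huc, hvc, j, hjc, huj, hvj, huv⟩ := h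
  set S := (univ.erase c).erase j
  have hS : ∀ i, i ∈ S ↔ i ≠ c ∧ i ≠ j := by simp [S, and_comm]
  set f : (ι → ℝ) →ₗ[ℝ] ℝ := ∑ i ∈ S, (2 * u i - 1) • LinearMap.proj i
  -- `C - f x` is the Hamming distance on `S` from `x` to `u`, where `C = ∑ i ∈ S, u i`
  have hgap : ∀ x ∈ X, ∑ i ∈ S, u i - f x = ∑ i ∈ S, (u i - x i) ^ 2 := fun x hx => by
    simp only [f, LinearMap.coe_sum, Finset.sum_apply, LinearMap.smul_apply, LinearMap.proj_apply,
      smul_eq_mul, ← sum_sub_distrib]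
    refine sum_congr rfl fun i _ => ?_
    rcases hX01 u hu i with h | h <;> rcases hX01 x hx i with h' | h' <;> norm_num [h, h']
  refine polytopeAdj_of_forall_le hu hv (fun h => by simp [h, hvc] at huc) f (∑ i ∈ S, u i)
    (fun x hx => ?_) (fun x hx => ?_)
  · linarith [hgap x hx, sum_nonneg fun i (_ : i ∈ S) => sq_nonneg (u i - x i)]
  rw [eq_comm, ← sub_eq_zero, hgap x hx, sum_eq_zero_iff_of_nonneg fun _ _ => sq_nonneg _]
  simp only [sq_eq_zero_iff, sub_eq_zero, hS]
  refine ⟨fun hxu => ?_, ?_⟩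
  · have hoff : ∀ i, i ≠ c → i ≠ j → x i = u i := fun i hic hij => (hxu i ⟨hic, hij⟩).symm
    have hcj := huni.add_eq_add_of_forall_ne hX01 hx hu hjc hoff
    rcases hX01 x hx c with hxc | hxc
    · left
      ext i
      rcases eq_or_ne i c with rfl | hic
      · rw [hxc, huc]
      rcases eq_or_ne i j with rfl | hij
      · linarith
      exact hoff i hic hij
    · right
      ext i
      rcases eq_or_ne i c with rfl | hic
      · rw [hxc, hvc]
      rcases eq_or_ne i j with rfl | hij
      · linarith
      exact (hoff i hic hij).trans (huv i hic hij)
  · rintro (rfl | rfl) i ⟨hic, hij⟩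
    exacts [rfl, huv i hic hij]

theorem isExchange_of_forall_imp (hX01 : IsZeroOne X) (huni : IsUniform X ρ) (hu : u ∈ X)
    (hv : v ∈ X) (huc : u c = 0) (hvc : v c = 1) (h : ∀ i, i ≠ c → v i = 1 → u i = 1) :
    IsExchange c u v := by
  have hD : #{i ∈ univ.erase c | u i ≠ v i} = 1 := by
    have hsum : ∑ i ∈ univ.erase c, (u i - v i) = 1 := by
      have h1 := huni.sum_eq hX01 hu
      have h2 := huni.sum_eq hX01 hv
      rw [← add_sum_erase _ _ (mem_univ c)] at h1 h2
      rw [sum_sub_distrib]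
      linarith
    have hcard : ∑ i ∈ univ.erase c, (u i - v i) = #{i ∈ univ.erase c | u i ≠ v i} := by
      rw [natCast_card_filter]
      refine sum_congr rfl fun i hi => ?_
      have := h i (ne_of_mem_erase hi)
      rcases hX01 u hu i with h' | h' <;> rcases hX01 v hv i with h'' | h'' <;> simp_all
    exact_mod_cast hcard.symm.trans hsum
  obtain ⟨j, hj⟩ := card_eq_one.1 hD
  have hmem : ∀ i, i ≠ c → u i ≠ v i → i = j := fun i hic hi =>
    mem_singleton.1 (hj ▸ mem_filter.2 ⟨mem_erase.2 ⟨hic, mem_univ i⟩, hi⟩)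
  obtain ⟨hjc, hj⟩ := mem_filter.1 (hj ▸ mem_singleton_self j : j ∈ _)
  have hvj : v j = 0 := (hX01 v hv j).resolve_right fun h1 =>
    hj (by rw [h1, h _ (ne_of_mem_erase hjc) h1])
  refine ⟨huc, hvc, j, ne_of_mem_erase hjc, ?_, hvj, fun i hic hij => ?_⟩
  · exact (hX01 u hu j).resolve_left fun h0 => hj (h0.trans hvj.symm)
  · by_contra hne
    exact hij (hmem i hic hne)

end Exchange

section Wall

variable {ι : Type*} {X : Finset (ι → ℝ)}

def wallOf (X : Finset (ι → ℝ)) (σ : ι → Option Bool) : Finset (ι → ℝ) :=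
  {x ∈ X | ∀ i b, σ i = some b → x i = if b then 1 else 0}

lemma wallOf_subset {σ : ι → Option Bool} : wallOf X σ ⊆ X :=
  filter_subset _ _

lemma coe_wallOf (σ : ι → Option Bool) : (wallOf X σ : Set (ι → ℝ)) =
    {x | x ∈ X ∧ ∀ i, ∀ b, σ i = some b → x i = if b then (1 : ℝ) else 0} := by
  ext
  simp [wallOf]

lemma eq_none_of_mem_wallOf {σ : ι → Option Bool} {f : ι} {x y : ι → ℝ} (hx : x ∈ wallOf X σ)
    (hy : y ∈ wallOf X σ) (hxy : x f ≠ y f) : σ f = none := by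
  by_contra h
  obtain ⟨b, hb⟩ := Option.ne_none_iff_exists'.1 h
  exact hxy (((mem_filter.1 hx).2 f b hb).trans ((mem_filter.1 hy).2 f b hb).symm)

lemma wallOf_update {σ : ι → Option Bool} {f : ι} (hσ : σ f = none) (b : Bool) :
    wallOf X (update σ f (some b)) = {x ∈ wallOf X σ | x f = if b then 1 else 0} := by
  ext x
  simp only [wallOf, mem_filter, and_assoc]
  refine and_congr_right fun _ => ⟨fun h => ⟨fun i b' hi => h i b' ?_, h f b (by simp)⟩, ?_⟩
  · rwa [update_of_ne (by rintro rfl; simp [hσ] at hi)]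
  · rintro ⟨h, hf⟩ i b' hi
    rcases eq_or_ne i f with rfl | hif
    · obtain rfl : b = b' := by simpa using hi
      exact hf
    · exact h i b' (by rwa [update_of_ne hif] at hi)

lemma IsBalancedPolytope.card_mul_le (hbal : IsBalancedPolytope X) {σ : ι → Option Bool}
    {c f : ι} (hcf : c ≠ f) (hc : IsStarCoord (wallOf X σ : Set (ι → ℝ)) c)
    (hf : IsStarCoord (wallOf X σ : Set (ι → ℝ)) f) :
    #{x ∈ {x ∈ wallOf X σ | x c = 0} | x f = 0} * #{x ∈ {x ∈ wallOf X σ | x c = 1} | x f = 1} ≤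
      #{x ∈ {x ∈ wallOf X σ | x c = 1} | x f = 0} *
        #{x ∈ {x ∈ wallOf X σ | x c = 0} | x f = 1} := by
  obtain ⟨x, hx, -⟩ := id hc
  simpa only [filter_filter, ncard_sep_coe] using hbal _ ⟨⟨x, hx⟩, σ, coe_wallOf σ⟩ c f hcf hc hf

end Wall

section Hall

variable {ι : Type*}

-- Multiplying out, the hypotheses give `(p a₁ - q a₀) (q r - p s) > 0`; the second factor is `≥ 0`.
lemma add_mul_lt_add_mul_of_slices {p q r s a₀ a₁ g₀ g₁ g : ℕ} (hp : 0 < p) (hq : 0 < q)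
    (hg : g₀ + g₁ ≤ g) (hdef : (p + q) * g < (r + s) * (a₀ + a₁)) (h₀ : r * a₀ ≤ p * g₀)
    (h₁ : s * a₁ ≤ q * g₁) (hbal : p * s ≤ r * q) : (a₀ + a₁) * q < (p + q) * a₁ := by
  by_contra! hge
  zify at *
  nlinarith [mul_le_mul_of_nonneg_left h₀ (by positivity : (0 : ℤ) ≤ q * (p + q)),
    mul_le_mul_of_nonneg_left h₁ (by positivity : (0 : ℤ) ≤ p * (p + q)),
    mul_le_mul_of_nonneg_left hg (by positivity : (0 : ℤ) ≤ p * q * (p + q)),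
    mul_lt_mul_of_pos_left hdef (by positivity : (0 : ℤ) < p * q),
    mul_nonneg (sub_nonneg.2 hbal) (sub_nonneg.2 hge)]

theorem card_mul_lt_card_mul_of_slices {r : (ι → ℝ) → (ι → ℝ) → Prop} {L R A : Finset (ι → ℝ)}
    {f : ι} (hL : ∀ x ∈ L, x f = 0 ∨ x f = 1) (hR : ∀ x ∈ R, x f = 0 ∨ x f = 1)
    (h0 : ProportionalHall r {x ∈ L | x f = 0} {x ∈ R | x f = 0})
    (h1 : ProportionalHall r {x ∈ L | x f = 1} {x ∈ R | x f = 1})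
    (hbal : #{x ∈ L | x f = 0} * #{x ∈ R | x f = 1} ≤ #{x ∈ R | x f = 0} * #{x ∈ L | x f = 1})
    (hp : 0 < #{x ∈ L | x f = 0}) (hq : 0 < #{x ∈ L | x f = 1}) (hA : A ⊆ L)
    (hdef : #L * #(neighbors r A R) < #R * #A) :
    #A * #{x ∈ L | x f = 1} < #L * #{x ∈ A | x f = 1} := by
  have hA01 : ∀ x ∈ A, x f = 0 ∨ x f = 1 := fun x hx => hL x (hA hx)
  have hall₀ := h0 {x ∈ A | x f = 0} (filter_subset_filter _ hA)
  have hall₁ := h1 {x ∈ A | x f = 1} (filter_subset_filter _ hA)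
  have hN : ∀ t : ℝ, neighbors r {x ∈ A | x f = t} {x ∈ R | x f = t} ⊆
      {x ∈ neighbors r A R | x f = t} := fun t v hv => by
    obtain ⟨⟨hvR, hvt⟩, u, hu, huv⟩ := by simpa only [neighbors, mem_filter] using hv
    exact mem_filter.2 ⟨mem_filter.2 ⟨hvR, u, hu.1, huv⟩, hvt⟩
  have hg := add_le_add (card_le_card (hN 0)) (card_le_card (hN 1))
  rw [card_filter_eq_zero_add_card_filter_eq_one fun x hx => hR x (neighbors_subset hx)] at hg
  rw [← card_filter_eq_zero_add_card_filter_eq_one hL,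
    ← card_filter_eq_zero_add_card_filter_eq_one hR,
    ← card_filter_eq_zero_add_card_filter_eq_one hA01] at hdef
  rw [← card_filter_eq_zero_add_card_filter_eq_one hL,
    ← card_filter_eq_zero_add_card_filter_eq_one hA01]
  exact add_mul_lt_add_mul_of_slices hp hq hg hdef hall₀ hall₁ hbal

lemma card_mul_le_card_mul_of_card_eq_zero {L A : Finset (ι → ℝ)} {f : ι}
    (hL : ∀ x ∈ L, x f = 0 ∨ x f = 1) (hA : A ⊆ L)
    (h : #{x ∈ L | x f = 0} = 0 ∨ #{x ∈ L | x f = 1} = 0) :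
    #A * #{x ∈ L | x f = 1} ≤ #L * #{x ∈ A | x f = 1} := by
  rcases h with h | h
  · have hall : ∀ x ∈ L, x f = 1 := fun x hx =>
      (hL x hx).resolve_left (filter_eq_empty_iff.1 (card_eq_zero.1 h) hx)
    rw [filter_true_of_mem hall, filter_true_of_mem fun x hx => hall x (hA hx), mul_comm]
  · simp [h]

variable {X : Finset (ι → ℝ)}

theorem card_mul_lt_card_mul_wallOf (hX01 : IsZeroOne X) (hbal : IsBalancedPolytope X)
    {σ : ι → Option Bool} {c f : ι} {A : Finset (ι → ℝ)}
    (ih : ∀ σ', #(wallOf X σ') < #(wallOf X σ) →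
      ProportionalHall (IsExchange c) {x ∈ wallOf X σ' | x c = 0} {x ∈ wallOf X σ' | x c = 1})
    (hc : IsStarCoord (wallOf X σ : Set (ι → ℝ)) c) (hA : A ⊆ {x ∈ wallOf X σ | x c = 0})
    (hdef : #{x ∈ wallOf X σ | x c = 0} *
      #(neighbors (IsExchange c) A {x ∈ wallOf X σ | x c = 1}) < #{x ∈ wallOf X σ | x c = 1} * #A)
    (hp : 0 < #{x ∈ {x ∈ wallOf X σ | x c = 0} | x f = 0})
    (hq : 0 < #{x ∈ {x ∈ wallOf X σ | x c = 0} | x f = 1}) :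
    #A * #{x ∈ {x ∈ wallOf X σ | x c = 0} | x f = 1} <
      #{x ∈ wallOf X σ | x c = 0} * #{x ∈ A | x f = 1} := by
  have hW01 : ∀ x ∈ wallOf X σ, x f = 0 ∨ x f = 1 := fun x hx => hX01 x (wallOf_subset hx) f
  obtain ⟨⟨x₀W, x₀c⟩, x₀f⟩ := by simpa only [mem_filter] using (card_pos.1 hp).choose_spec
  obtain ⟨⟨x₁W, x₁c⟩, x₁f⟩ := by simpa only [mem_filter] using (card_pos.1 hq).choose_spec
  have hσ : σ f = none := eq_none_of_mem_wallOf x₀W x₁W (by rw [x₀f, x₁f]; norm_num)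
  have hcf : c ≠ f := by
    rintro rfl
    rw [x₁c] at x₁f
    norm_num at x₁f
  have hsub : ∀ b : Bool, ∀ z ∈ wallOf X σ, z f ≠ (if b then 1 else 0) →
      ProportionalHall (IsExchange c) {x ∈ {x ∈ wallOf X σ | x c = 0} | x f = if b then 1 else 0}
        {x ∈ {x ∈ wallOf X σ | x c = 1} | x f = if b then 1 else 0} := by
    intro b z hz hzf
    have := ih (update σ f (some b)) <| by
      rw [wallOf_update hσ]
      exact card_lt_card (filter_ssubset.2 ⟨z, hz, hzf⟩)
    rw [wallOf_update hσ] at this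
    convert this using 1 <;> exact filter_comm _ _ _
  exact card_mul_lt_card_mul_of_slices (fun x hx => hW01 x (filter_subset _ _ hx))
    (fun x hx => hW01 x (filter_subset _ _ hx))
    (by simpa using hsub false _ x₁W (by simp [x₁f]))
    (by simpa using hsub true _ x₀W (by simp [x₀f]))
    (hbal.card_mul_le hcf hc ⟨_, x₀W, _, x₁W, by rw [x₀f, x₁f]; norm_num⟩) hp hq hA hdef

variable [Fintype ι] {ρ : ℕ}

theorem proportionalHall_wallOf_of_card_le_one (hX01 : IsZeroOne X) (huni : IsUniform X ρ)
    (hbal : IsBalancedPolytope X) {σ : ι → Option Bool} {c : ι}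
    (hW0 : #{x ∈ wallOf X σ | x c = 0} ≤ 1) :
    ProportionalHall (IsExchange c) {x ∈ wallOf X σ | x c = 0} {x ∈ wallOf X σ | x c = 1} := by
  intro A hA
  obtain rfl | ⟨u, hu⟩ := A.eq_empty_or_nonempty
  · simp
  have hu0 := hA hu
  have hW0u : {x ∈ wallOf X σ | x c = 0} = {u} :=
    eq_singleton_iff_unique_mem.2 ⟨hu0, fun x hx => card_le_one.1 hW0 x hx u hu0⟩
  obtain rfl : A = {u} := (subset_singleton_iff.1 (hW0u ▸ hA)).resolve_left (ne_empty_of_mem hu)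
  obtain ⟨huW, huc⟩ := mem_filter.1 hu0
  have hexch : ∀ v ∈ {x ∈ wallOf X σ | x c = 1}, IsExchange c u v := by
    intro v hv
    obtain ⟨hvW, hvc⟩ := mem_filter.1 hv
    refine isExchange_of_forall_imp hX01 huni (wallOf_subset huW) (wallOf_subset hvW) huc hvc
      fun i hic hvi => ?_
    by_contra hui
    have hui : u i = 0 := (hX01 u (wallOf_subset huW) i).resolve_right hui
    -- `u` is alone in `W₀`, so the cell `W₀ ∩ {x i = 1}` is empty while `u` and `v` fill two others
    have := hbal.card_mul_le (Ne.symm hic) ⟨u, huW, v, hvW, by simp [huc, hvc]⟩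
      ⟨u, huW, v, hvW, by simp [hui, hvi]⟩
    have hs : #{x ∈ {x ∈ wallOf X σ | x c = 1} | x i = 1} = 0 := by
      simpa [hW0u, filter_singleton, hui] using this
    exact card_ne_zero_of_mem (mem_filter.2 ⟨hv, hvi⟩) hs
  have hN : neighbors (IsExchange c) {u} {x ∈ wallOf X σ | x c = 1} = {x ∈ wallOf X σ | x c = 1} :=
    filter_true_of_mem fun v hv => ⟨u, mem_singleton_self u, hexch v hv⟩
  rw [hN, hW0u]
  simp [mul_comm]

theorem proportionalHall_wallOf (hX01 : IsZeroOne X) (huni : IsUniform X ρ)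
    (hbal : IsBalancedPolytope X) (σ : ι → Option Bool) (c : ι) :
    ProportionalHall (IsExchange c) {x ∈ wallOf X σ | x c = 0} {x ∈ wallOf X σ | x c = 1} := by
  induction hn : #(wallOf X σ) using Nat.strong_induction_on generalizing σ with
  | _ n ih =>
  set W := wallOf X σ
  have hW₀ : {x ∈ W | x c = 0} ⊆ X := (filter_subset _ _).trans wallOf_subset
  have hW₀01 : ∀ x ∈ {x ∈ W | x c = 0}, ∀ i, x i = 0 ∨ x i = 1 := fun x hx => hX01 x (hW₀ hx)
  intro A hA
  by_contra! hdef
  rcases le_or_gt #{x ∈ W | x c = 0} 1 with hW0 | hW0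
  · exact hdef.not_ge (proportionalHall_wallOf_of_card_le_one hX01 huni hbal hW0 A hA)
  obtain ⟨x, hx, y, hy, hxy⟩ := one_lt_card.1 hW0
  obtain ⟨f₀, hf₀⟩ := Function.ne_iff.1 hxy
  obtain ⟨z, hz⟩ : {x ∈ W | x c = 1}.Nonempty :=
    card_pos.1 (Nat.pos_of_ne_zero fun h => by simp [h] at hdef)
  have hc : IsStarCoord (W : Set (ι → ℝ)) c := ⟨x, (mem_filter.1 hx).1, z, (mem_filter.1 hz).1,
    by rw [(mem_filter.1 hx).2, (mem_filter.1 hz).2]; norm_num⟩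
  have hstrict := fun f => card_mul_lt_card_mul_wallOf (f := f) hX01 hbal
    (fun σ' h => ih _ (hn ▸ h) σ' rfl) hc hA hdef
  have hle : ∀ f,
      #A * #{x ∈ {x ∈ W | x c = 0} | x f = 1} ≤ #{x ∈ W | x c = 0} * #{x ∈ A | x f = 1} := by
    intro f
    by_cases hpq : 0 < #{x ∈ {x ∈ W | x c = 0} | x f = 0} ∧ 0 < #{x ∈ {x ∈ W | x c = 0} | x f = 1}
    · exact (hstrict f hpq.1 hpq.2).le
    · exact card_mul_le_card_mul_of_card_eq_zero (fun x hx => hW₀01 x hx f) hA (by omega)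
  obtain ⟨hp₀, hq₀⟩ := filter_nonempty_of_ne (fun x hx => hW₀01 x hx f₀) hx hy hf₀
  -- summing over all coordinates, both sides count `ρ` ones per point of `A` and of `W₀`
  have hsum := sum_lt_sum (fun f _ => hle f) ⟨f₀, mem_univ _, hstrict f₀ hp₀.card_pos hq₀.card_pos⟩
  rw [← mul_sum, ← mul_sum, huni.sum_card_filter (hA.trans hW₀), huni.sum_card_filter hW₀] at hsum
  exact hsum.ne (by ring)

end Hall

theorem hasFracMatching_of_proportionalHall {ι : Type*} [Fintype ι] {X W : Finset (ι → ℝ)}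
    {ρ : ℕ} (hX01 : IsZeroOne X) (huni : IsUniform X ρ) (hWX : W ⊆ X) {c : ι}
    (h : ProportionalHall (IsExchange c) {x ∈ W | x c = 0} {x ∈ W | x c = 1})
    (h₀ : {x ∈ W | x c = 0}.Nonempty) (h₁ : {x ∈ W | x c = 1}.Nonempty) :
    HasFracMatching X W c := by
  obtain ⟨m, hm, hrow, hcol⟩ := h.exists_biregular
  have hsum_row : ∀ u, ∑ v ∈ X, (m u v : ℚ) = ∑ v ∈ {x ∈ W | x c = 1}, (m u v : ℚ) := fun u =>
    (sum_subset ((filter_subset _ _).trans hWX) fun v _ hv => by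
      simpa using mt (fun h => (hm u v h).2.1) hv).symm
  have hsum_col : ∀ v, ∑ u ∈ X, (m u v : ℚ) = ∑ u ∈ {x ∈ W | x c = 0}, (m u v : ℚ) := fun v =>
    (sum_subset ((filter_subset _ _).trans hWX) fun u _ hu => by
      simpa using mt (fun h => (hm u v h).1) hu).symm
  have ha : (#{x ∈ W | x c = 0} : ℚ) ≠ 0 := by exact_mod_cast h₀.card_pos.ne'
  have hb : (#{x ∈ W | x c = 1} : ℚ) ≠ 0 := by exact_mod_cast h₁.card_pos.ne'
  refine ⟨fun u v => m u v / (#{x ∈ W | x c = 0} * #{x ∈ W | x c = 1}), fun _ _ => by positivity,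
    fun u v huv => ?_, fun u hu huc => ?_, fun v hv hvc => ?_⟩
  · obtain ⟨hu, hv, hex⟩ := hm u v fun h => huv (by simp [h])
    obtain ⟨huW, huc⟩ := mem_filter.1 hu
    obtain ⟨hvW, hvc⟩ := mem_filter.1 hv
    exact ⟨hex.polytopeAdj hX01 huni (hWX huW) (hWX hvW), huW, hvW, huc, hvc⟩
  · rw [ncard_sep_coe, ← sum_div, hsum_row, ← Nat.cast_sum, hrow u (mem_filter.2 ⟨hu, huc⟩)]
    field_simp
  · rw [ncard_sep_coe, ← sum_div, hsum_col, ← Nat.cast_sum, hcol v (mem_filter.2 ⟨hv, hvc⟩)]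
    field_simp

theorem hasFractionalWallMatchings_of_balanced_uniform_general {d : ℕ}
    (X : Finset (Fin d → ℝ)) (hX01 : IsZeroOne X) (ρ : ℕ)
    (huni : IsUniform X ρ) (hbal : IsBalancedPolytope X) :
    HasFractionalWallMatchings X := by
  rintro _ ⟨-, σ, rfl⟩ μ ⟨⟨x, hx, y, hy, hxy⟩, -⟩
  rw [← coe_wallOf] at hx hy ⊢
  obtain ⟨h₀, h₁⟩ := filter_nonempty_of_ne (fun x hx => hX01 x (wallOf_subset hx) μ) hx hy hxy
  exact hasFracMatching_of_proportionalHall hX01 huni wallOf_subset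
    (proportionalHall_wallOf hX01 huni hbal σ μ) h₀ h₁

/-- Every balanced, `ρ`-uniform 0/1-polytope `P ⊆ ℝ^d` has
fractional wall-matchings. -/
theorem hasFractionalWallMatchings_of_balanced_uniform {d : ℕ}
    (X : Finset (Fin d → ℝ)) (hX01 : IsZeroOne X) (hne : X.Nonempty) (ρ : ℕ)
    (huni : IsUniform X ρ) (hbal : IsBalancedPolytope X) :
    HasFractionalWallMatchings X :=
  hasFractionalWallMatchings_of_balanced_uniform_general X hX01 ρ huni hbal
end
end

section
/- Let d ≥ 1 and let Q_d be the graph on vertex set {0,1}^d in which two vertices are adjacent if and only if they differ in exactly one coordinate. For s ∈ {0,1}^d let s̄ denote its antipodal vertex, defined by s̄_i = 1 − s_i for all i. Then there exist unit flows ψ_s from s to s̄ in the network N(Q_d), one for each s ∈ {0,1}^d, such that the total flow Σ_{s ∈ {0,1}^d} ψ_s(a) equals exactly 1 on every arc a of N(Q_d). -/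
open scoped Classical

noncomputable section

/-- The graph `Q_d` of the `d`-cube: vertices are `{0,1}^d`, two vertices being
adjacent iff they differ in exactly one coordinate. -/
def cubeGraph (d : ℕ) : SimpleGraph (Fin d → Bool) where
  Adj u v := ∃ i, u i ≠ v i ∧ ∀ j, j ≠ i → u j = v j
  symm := by
    constructor
    rintro u v ⟨i, h1, h2⟩
    exact ⟨i, h1.symm, fun j hj => (h2 j hj).symm⟩
  loopless := by constructor; rintro u ⟨i, h, _⟩; exact h rfl

/-! Route `s` to its antipode along the path that flips the coordinates `0, 1, …, d-1` in this
order. An arc `(u, v)` of `Q_d` in direction `i` is then the `i`-th step of exactly one of these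
paths, the one starting at `u` with its first `i` coordinates flipped, so together the paths
cover every arc exactly once. -/

open Finset

section WalkFlow

variable {V : Type*} [DecidableEq V]

def walkFlow (x : ℕ → V) (n : ℕ) (p : V × V) : ℚ :=
  ∑ k ∈ range n, if p = (x k, x (k + 1)) then 1 else 0

variable [Fintype V]

lemma sum_walkFlow_out (x : ℕ → V) (n : ℕ) (v : V) :
    ∑ w, walkFlow x n (v, w) = ∑ k ∈ range n, if v = x k then 1 else 0 := by
  unfold walkFlow
  rw [sum_comm]
  simp [Prod.ext_iff, ite_and]

lemma sum_walkFlow_in (x : ℕ → V) (n : ℕ) (v : V) :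
    ∑ w, walkFlow x n (w, v) = ∑ k ∈ range n, if v = x (k + 1) then 1 else 0 := by
  unfold walkFlow
  rw [sum_comm]
  simp [Prod.ext_iff, ite_and]

theorem isUnitFlow_walkFlow (G : SimpleGraph V) (x : ℕ → V) (n : ℕ)
    (hx : ∀ k < n, G.Adj (x k) (x (k + 1))) : IsUnitFlow G (x 0) (x n) (walkFlow x n) := by
  refine ⟨fun p => sum_nonneg fun k _ => ?_, fun p hp => sum_eq_zero fun k hk => ?_, fun v => ?_⟩
  · split_ifs <;> norm_num
  · rw [if_neg]
    rintro rfl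
    exact hp (hx k (mem_range.mp hk))
  · rw [sum_walkFlow_out, sum_walkFlow_in, ← sum_sub_distrib,
      sum_range_sub' (fun k => if v = x k then (1 : ℚ) else 0)]

end WalkFlow

section FlipFirst

variable {d : ℕ}

def flipFirst (k : ℕ) (s : Fin d → Bool) : Fin d → Bool :=
  fun j => if (j : ℕ) < k then !s j else s j

@[simp]
lemma flipFirst_zero (s : Fin d → Bool) : flipFirst 0 s = s := by
  funext j; simp [flipFirst]

lemma flipFirst_of_le {k : ℕ} (hk : d ≤ k) (s : Fin d → Bool) :
    flipFirst k s = fun j => !s j := by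
  funext j; simp [flipFirst, j.isLt.trans_le hk]

@[simp]
lemma flipFirst_flipFirst (k : ℕ) (s : Fin d → Bool) : flipFirst k (flipFirst k s) = s := by
  funext j; by_cases hj : (j : ℕ) < k <;> simp [flipFirst, hj]

lemma flipFirst_succ_apply (k : ℕ) (s : Fin d → Bool) (j : Fin d) :
    flipFirst (k + 1) s j = if (j : ℕ) = k then !flipFirst k s j else flipFirst k s j := by
  simp only [flipFirst]
  split_ifs <;> first | rfl | omega

lemma cubeGraph_adj_flipFirst_succ (s : Fin d → Bool) {k : ℕ} (hk : k < d) :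
    (cubeGraph d).Adj (flipFirst k s) (flipFirst (k + 1) s) :=
  ⟨⟨k, hk⟩, by simp [flipFirst_succ_apply], fun j hj => by
    rw [flipFirst_succ_apply, if_neg (fun h => hj (Fin.ext h))]⟩

lemma arc_eq_flipFirst_step_iff {u v : Fin d → Bool} {i : Fin d} (hne : u i ≠ v i)
    (hagree : ∀ j, j ≠ i → u j = v j) (k : ℕ) (s : Fin d → Bool) :
    (u = flipFirst k s ∧ v = flipFirst (k + 1) s) ↔ k = i ∧ s = flipFirst i u := by
  constructor
  · rintro ⟨rfl, rfl⟩
    rw [flipFirst_succ_apply] at hne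
    split_ifs at hne with h
    · exact ⟨h.symm, by rw [← h, flipFirst_flipFirst]⟩
    · exact absurd rfl hne
  · rintro ⟨rfl, rfl⟩
    refine ⟨(flipFirst_flipFirst _ _).symm, funext fun j => ?_⟩
    rw [flipFirst_succ_apply, flipFirst_flipFirst]
    split_ifs with h
    · rw [Fin.ext h]
      exact Bool.eq_not_iff.mpr hne.symm
    · exact (hagree j (fun hj => h (congrArg Fin.val hj))).symm

lemma sum_walkFlow_flipFirst {u v : Fin d → Bool} (huv : (cubeGraph d).Adj u v) :
    ∑ s, walkFlow (fun k => flipFirst k s) d (u, v) = 1 := by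
  obtain ⟨i, hne, hagree⟩ := huv
  unfold walkFlow
  rw [sum_comm]
  simp only [Prod.mk.injEq, arc_eq_flipFirst_step_iff hne hagree, ite_and]
  simp [i.isLt]

end FlipFirst

theorem cube_antipodal_flows_general (d : ℕ) :
    ∃ ψ : (Fin d → Bool) → ((Fin d → Bool) × (Fin d → Bool) → ℚ),
      (∀ s, IsUnitFlow (cubeGraph d) s (fun i => ! s i) (ψ s)) ∧
      (∀ p : (Fin d → Bool) × (Fin d → Bool), (cubeGraph d).Adj p.1 p.2 →
        ∑ s : Fin d → Bool, ψ s p = 1) := by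
  refine ⟨fun s => walkFlow (fun k => flipFirst k s) d, fun s => ?_,
    fun _ hp => sum_walkFlow_flipFirst hp⟩
  have h := isUnitFlow_walkFlow (cubeGraph d) (fun k => flipFirst k s) d
    (fun _ hk => cubeGraph_adj_flipFirst_succ s hk)
  rwa [flipFirst_zero, flipFirst_of_le le_rfl] at h

/-- For `d ≥ 1` there exist unit flows `ψ s` from each vertex
`s` of the `d`-cube to its antipodal vertex `s̄` in the network `N(Q_d)` such
that the total flow `Σ_s ψ s` equals exactly `1` on every arc of `N(Q_d)`. -/
theorem cube_antipodal_flows (d : ℕ) (hd : 1 ≤ d) :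
    ∃ ψ : (Fin d → Bool) → ((Fin d → Bool) × (Fin d → Bool) → ℚ),
      (∀ s, IsUnitFlow (cubeGraph d) s (fun i => ! s i) (ψ s)) ∧
      (∀ p : (Fin d → Bool) × (Fin d → Bool), (cubeGraph d).Adj p.1 p.2 →
        ∑ s : Fin d → Bool, ψ s p = 1) :=
  cube_antipodal_flows_general d
end
end

section
/- Let P ⊆ ℝ^d be a 0/1-polytope with at least two vertices such that for each pair of distinct vertices s, t ∈ vert(P) there is a uniquely edge-cube spanned wall W of P whose unique spanning affine edge-cube C contains s and t with t equal to the antipodal vertex of s in C. Then h(G(P)) ≥ 1. -/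
open scoped Classical

noncomputable section

/-- The mirror image `x^W = x ⊕ t^(W)` of a 0/1-point `x` with respect to a wall
`W`, where `t^(W)` has ones exactly in the star coordinates of `W`. -/
def mirrorImage {ι : Type*} (W : Set (ι → ℝ)) (x : ι → ℝ) : ι → ℝ :=
  fun i => if IsStarCoord W i then 1 - x i else x i

/-- Coordinatewise addition modulo two of 0/1-vectors, realized over `ℝ`. -/
def xorVec {ι : Type*} (a b : ι → ℝ) : ι → ℝ :=
  fun i => a i + b i - 2 * a i * b i

/-- `C` is an affine edge-cube in the 0/1-polytope with vertex set `X`: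
`C = {x ⊕ ε₁z⁽¹⁾ ⊕ ⋯ ⊕ εₖz⁽ᵏ⁾ : ε ∈ {0,1}^k}` for some `x ∈ C` and pairwise
orthogonal nonzero 0/1-vectors `z⁽¹⁾, …, z⁽ᵏ⁾`, and two elements of `C` are
adjacent in `G(P)` exactly when they differ by precisely one of the `z⁽ʲ⁾`. -/
def IsAffineEdgeCube {ι : Type*} [Fintype ι] (X : Finset (ι → ℝ))
    (C : Set (ι → ℝ)) : Prop :=
  C ⊆ ↑X ∧ ∃ (k : ℕ) (x : ι → ℝ) (z : Fin k → (ι → ℝ)),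
    x ∈ C ∧
    (∀ j, (∀ i, z j i = 0 ∨ z j i = 1) ∧ z j ≠ 0) ∧
    (∀ a b, a ≠ b → ∑ i, z a i * z b i = 0) ∧
    C = {y | ∃ ε : Fin k → Bool, y = xorVec x (∑ j, if ε j then z j else 0)} ∧
    (∀ y₁ ∈ C, ∀ y₂ ∈ C, (PolytopeAdj X y₁ y₂ ↔ ∃ j, y₂ = xorVec y₁ (z j)))

/-- The wall spanned by `A`: the intersection of all walls of `P` containing `A`. -/
def spannedWall {ι : Type*} (X : Finset (ι → ℝ)) (A : Set (ι → ℝ)) : Set (ι → ℝ) :=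
  ⋂₀ {W | IsWall X W ∧ A ⊆ W}


/-!
For `s ∈ S` and `t ∉ S`, walk from `s` to `t = mirrorImage C s` inside the unique edge-cube `C`
given by the hypothesis, flipping the directions of `C` one at a time in a fixed order. Some step
`u v` of this walk is an edge of `G(P)` leaving `S`; route `(s, t)` through it. For a fixed cut
edge `u v`, the pair `(s, t)` is determined by `C`, and `C` is determined by `mirrorImage C u`
alone, as well as by `mirrorImage C v` alone: the mirror image of a vertex fixes the star
coordinates, hence the spanned wall, hence the unique cube spanning it. The two families of
mirror images are disjoint sets of vertices, so at most `|X| / 2` pairs are routed through each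
cut edge. Thus `|S| |Sᶜ| ≤ |δ(S)| |X| / 2`, and `|Sᶜ| ≥ |X| / 2` gives `|δ(S)| ≥ |S|`.
-/

open scoped symmDiff

section Xor

variable {ι : Type*}

lemma xorVec_comm (a b : ι → ℝ) : xorVec a b = xorVec b a := by
  funext i
  simp only [xorVec]
  ring

lemma xorVec_zero (a : ι → ℝ) : xorVec a 0 = a := by
  funext i
  simp [xorVec]

lemma xorVec_xorVec_cancel_right (a : ι → ℝ) {b : ι → ℝ} (hb : ∀ i, b i = 0 ∨ b i = 1) :
    xorVec (xorVec a b) b = a := by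
  funext i
  rcases hb i with h | h <;> simp only [xorVec, h] <;> ring

lemma xorVec_left_injective {b : ι → ℝ} (hb : ∀ i, b i = 0 ∨ b i = 1) :
    Function.Injective (xorVec · b) :=
  Function.LeftInverse.injective (g := (xorVec · b)) fun a => xorVec_xorVec_cancel_right a hb

lemma xorVec_right_injective {a : ι → ℝ} (ha : ∀ i, a i = 0 ∨ a i = 1) :
    Function.Injective (xorVec a) := fun b c h =>
  xorVec_left_injective ha (by simpa only [xorVec_comm a] using h)

end Xor

section StarCoord

variable {ι : Type*} {X : Finset (ι → ℝ)}

lemma isStarCoord_iff_of_mirrorImage_eq {A B : Set (ι → ℝ)} {u : ι → ℝ}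
    (hu : ∀ i, u i = 0 ∨ u i = 1) (h : mirrorImage A u = mirrorImage B u) (i : ι) :
    IsStarCoord A i ↔ IsStarCoord B i := by
  have hi := congrFun h i
  by_cases hA : IsStarCoord A i <;> by_cases hB : IsStarCoord B i <;>
    simp only [mirrorImage, hA, hB, if_true, if_false] at hi ⊢ <;>
    rcases hu i with h0 | h0 <;> norm_num [h0] at hi

lemma mirrorImage_ne_mirrorImage {A B : Set (ι → ℝ)} {u v : ι → ℝ} (huA : u ∈ A) (hvA : v ∈ A)
    (huB : u ∈ B) (hvB : v ∈ B) (huv : u ≠ v) : mirrorImage A u ≠ mirrorImage B v := by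
  obtain ⟨i, hi⟩ := Function.ne_iff.1 huv
  have hA : IsStarCoord A i := ⟨u, huA, v, hvA, hi⟩
  have hB : IsStarCoord B i := ⟨u, huB, v, hvB, hi⟩
  intro h
  have := congrFun h i
  simp only [mirrorImage, hA, hB, if_true] at this
  exact hi (by linarith)

lemma spannedWall_eq (hX01 : IsZeroOne X) {A : Set (ι → ℝ)} (hA : A ⊆ X) {u : ι → ℝ}
    (hu : u ∈ A) :
    spannedWall X A = {y | y ∈ X ∧ ∀ i, ¬ IsStarCoord A i → y i = u i} := by
  have hu01 := hX01 u (hA hu)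
  have hwall : IsWall X {y | y ∈ X ∧ ∀ i, ¬ IsStarCoord A i → y i = u i} := by
    refine ⟨⟨u, hA hu, fun _ _ => rfl⟩,
      fun i => if IsStarCoord A i then none else some (decide (u i = 1)), ?_⟩
    ext y
    refine and_congr_right fun _ => forall_congr' fun i => ?_
    by_cases hi : IsStarCoord A i
    · simp [hi]
    · rcases hu01 i with h | h <;> simp [hi, h]
  refine subset_antisymm (Set.sInter_subset_of_mem ⟨hwall, fun a ha => ⟨hA ha, ?_⟩⟩) ?_
  · exact fun i hi => by_contra fun hne => hi ⟨a, ha, u, hu, hne⟩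
  · rintro y ⟨hyX, hy⟩ W ⟨⟨-, σ, rfl⟩, hAW⟩
    refine ⟨hyX, fun i b hb => ?_⟩
    have hi : ¬ IsStarCoord A i := by
      rintro ⟨a, ha, a', ha', hne⟩
      exact hne (((hAW ha).2 i b hb).trans ((hAW ha').2 i b hb).symm)
    rw [hy i hi]
    exact (hAW hu).2 i b hb

end StarCoord

section EdgeCube

variable {ι : Type*} [Fintype ι] {X : Finset (ι → ℝ)} {C : Set (ι → ℝ)}

/-- A base point and directions `z⁽¹⁾, …, z⁽ᵏ⁾` exhibiting `C` as an affine edge-cube; the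
orthogonality of the 0/1-directions is recorded as disjointness of their supports. -/
structure EdgeCubeFrame (X : Finset (ι → ℝ)) (C : Set (ι → ℝ)) where
  k : ℕ
  base : ι → ℝ
  dir : Fin k → ι → ℝ
  subset : C ⊆ X
  dir_zeroOne : ∀ j i, dir j i = 0 ∨ dir j i = 1
  dir_ne_zero : ∀ j, dir j ≠ 0
  dir_mul_dir : ∀ a b, a ≠ b → ∀ i, dir a i * dir b i = 0
  mem_iff : ∀ y, y ∈ C ↔ ∃ A : Finset (Fin k), y = xorVec base (∑ j ∈ A, dir j)
  adj_iff : ∀ y₁ ∈ C, ∀ y₂ ∈ C, PolytopeAdj X y₁ y₂ ↔ ∃ j, y₂ = xorVec y₁ (dir j)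

lemma IsAffineEdgeCube.nonempty_frame (h : IsAffineEdgeCube X C) :
    Nonempty (EdgeCubeFrame X C) := by
  obtain ⟨hCX, k, x, z, -, hz, horth, hC, hadj⟩ := h
  refine ⟨⟨k, x, z, hCX, fun j => (hz j).1, fun j => (hz j).2, fun a b hab i => ?_,
    fun y => ?_, hadj⟩⟩
  · have hnonneg : ∀ i ∈ Finset.univ, 0 ≤ z a i * z b i := fun i _ => by
      rcases (hz a).1 i with ha | ha <;> rcases (hz b).1 i with hb | hb <;> simp [ha, hb]
    exact (Finset.sum_eq_zero_iff_of_nonneg hnonneg).1 (horth a b hab) i (Finset.mem_univ i)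
  · rw [hC]
    constructor
    · rintro ⟨ε, rfl⟩
      exact ⟨Finset.univ.filter (ε · = true), by rw [Finset.sum_filter]⟩
    · rintro ⟨A, rfl⟩
      exact ⟨fun j => decide (j ∈ A), by rw [← Finset.sum_filter]; simp⟩

noncomputable def IsAffineEdgeCube.frame (h : IsAffineEdgeCube X C) : EdgeCubeFrame X C :=
  Classical.choice h.nonempty_frame

namespace EdgeCubeFrame

variable (F : EdgeCubeFrame X C)

lemma dir_apply_cases (i : ι) :
    (∀ j, F.dir j i = 0) ∨ ∃ j₀, ∀ j, F.dir j i = if j = j₀ then 1 else 0 := by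
  rcases em (∃ j₀, F.dir j₀ i = 1) with ⟨j₀, hj₀⟩ | h
  · refine Or.inr ⟨j₀, fun j => ?_⟩
    split_ifs with hj
    · rwa [hj]
    · simpa [hj₀] using F.dir_mul_dir j j₀ hj i
  · exact Or.inl fun j => (F.dir_zeroOne j i).resolve_right fun hj => h ⟨j, hj⟩

lemma sum_dir_zeroOne (A : Finset (Fin F.k)) (i : ι) :
    (∑ j ∈ A, F.dir j) i = 0 ∨ (∑ j ∈ A, F.dir j) i = 1 := by
  rcases F.dir_apply_cases i with h | ⟨j₀, h⟩
  · simp [Finset.sum_apply, h]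
  · simp only [Finset.sum_apply, h, Finset.sum_ite_eq']
    split_ifs <;> simp

lemma xorVec_sum_symmDiff (y : ι → ℝ) (A B : Finset (Fin F.k)) :
    xorVec (xorVec y (∑ j ∈ A, F.dir j)) (∑ j ∈ B, F.dir j) =
      xorVec y (∑ j ∈ A ∆ B, F.dir j) := by
  funext i
  rcases F.dir_apply_cases i with h | ⟨j₀, h⟩ <;>
    simp only [xorVec, Finset.sum_apply, h, Finset.sum_ite_eq', Finset.sum_const_zero]
  · ring
  · by_cases hA : j₀ ∈ A <;> by_cases hB : j₀ ∈ B <;> simp [hA, hB, Finset.mem_symmDiff]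
    ring

lemma base_mem : F.base ∈ C :=
  (F.mem_iff _).2 ⟨∅, by rw [Finset.sum_empty, xorVec_zero]⟩

lemma xorVec_sum_mem {y : ι → ℝ} (hy : y ∈ C) (A : Finset (Fin F.k)) :
    xorVec y (∑ j ∈ A, F.dir j) ∈ C := by
  obtain ⟨E, rfl⟩ := (F.mem_iff y).1 hy
  exact (F.mem_iff _).2 ⟨E ∆ A, F.xorVec_sum_symmDiff _ E A⟩

lemma dir_injective : Function.Injective F.dir := by
  intro a b hab
  by_contra hne
  obtain ⟨i, hi⟩ : ∃ i, F.dir a i ≠ 0 := by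
    by_contra! h
    exact F.dir_ne_zero a (funext h)
  have h := F.dir_mul_dir a b hne i
  rw [← hab] at h
  exact hi (mul_self_eq_zero.1 h)

lemma isStarCoord_iff (hX01 : IsZeroOne X) (i : ι) :
    IsStarCoord C i ↔ ∃ j, F.dir j i = 1 := by
  constructor
  · rintro ⟨a, ha, b, hb, hab⟩
    by_contra! hno
    have hconst : ∀ y ∈ C, y i = F.base i := by
      intro y hy
      obtain ⟨A, rfl⟩ := (F.mem_iff y).1 hy
      simp [xorVec, Finset.sum_apply, fun j => (F.dir_zeroOne j i).resolve_right (hno j)]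
    exact hab ((hconst a ha).trans (hconst b hb).symm)
  · rintro ⟨j, hj⟩
    refine ⟨_, F.base_mem, _, F.xorVec_sum_mem F.base_mem {j}, ?_⟩
    rcases hX01 _ (F.subset F.base_mem) i with h | h <;> norm_num [xorVec, h, hj]

lemma mirrorImage_eq (hX01 : IsZeroOne X) (u : ι → ℝ) :
    mirrorImage C u = xorVec u (∑ j, F.dir j) := by
  funext i
  rcases F.dir_apply_cases i with h | ⟨j₀, h⟩
  · have hi : ¬ IsStarCoord C i := by simp [F.isStarCoord_iff hX01, h]
    simp [mirrorImage, hi, xorVec, Finset.sum_apply, h]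
  · have hi : IsStarCoord C i := (F.isStarCoord_iff hX01 i).2 ⟨j₀, by simp [h]⟩
    simp [mirrorImage, hi, xorVec, Finset.sum_apply, h]
    ring

def walk (s : ι → ℝ) (n : ℕ) : ι → ℝ :=
  xorVec s (∑ j ∈ Finset.univ.filter (fun j : Fin F.k => (j : ℕ) < n), F.dir j)

lemma walk_zero (s : ι → ℝ) : F.walk s 0 = s := by
  simp [walk, xorVec_zero]

lemma walk_k_eq_mirrorImage (hX01 : IsZeroOne X) (s : ι → ℝ) : F.walk s F.k = mirrorImage C s := by
  simp [walk, F.mirrorImage_eq hX01]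

lemma walk_mem {s : ι → ℝ} (hs : s ∈ C) (n : ℕ) : F.walk s n ∈ C :=
  F.xorVec_sum_mem hs _

lemma walk_succ (s : ι → ℝ) (m : Fin F.k) :
    F.walk s (m + 1) = xorVec (F.walk s m) (F.dir m) := by
  have hsteps : Finset.univ.filter (fun j : Fin F.k => (j : ℕ) < m + 1) =
      Finset.univ.filter (fun j : Fin F.k => (j : ℕ) < m) ∆ {m} := by
    ext j
    simp only [Finset.mem_filter, Finset.mem_univ, true_and, Finset.mem_symmDiff,
      Finset.mem_singleton, Fin.ext_iff]
    omega
  rw [walk, walk, hsteps, ← F.xorVec_sum_symmDiff, Finset.sum_singleton]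

def IsWalkEdge (s u v : ι → ℝ) : Prop :=
  ∃ m : Fin F.k, u = F.walk s m ∧ v = F.walk s (m + 1)

variable {F}

lemma IsWalkEdge.mem {s u v : ι → ℝ} (hs : s ∈ C) (h : F.IsWalkEdge s u v) : u ∈ C ∧ v ∈ C := by
  obtain ⟨m, rfl, rfl⟩ := h
  exact ⟨F.walk_mem hs _, F.walk_mem hs _⟩

lemma IsWalkEdge.polytopeAdj {s u v : ι → ℝ} (hs : s ∈ C) (h : F.IsWalkEdge s u v) :
    PolytopeAdj X u v := by
  obtain ⟨m, rfl, rfl⟩ := h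
  exact (F.adj_iff _ (F.walk_mem hs _) _ (F.walk_mem hs _)).2 ⟨m, F.walk_succ s m⟩

lemma IsWalkEdge.eq (hX01 : IsZeroOne X) {s s' u v : ι → ℝ} (hs : s ∈ C)
    (h : F.IsWalkEdge s u v) (h' : F.IsWalkEdge s' u v) : s = s' := by
  obtain ⟨m, rfl, hv⟩ := h
  obtain ⟨m', hu, hv'⟩ := h'
  have hu01 := hX01 _ (F.subset (F.walk_mem hs m))
  rw [F.walk_succ] at hv hv'
  obtain rfl : m = m' := F.dir_injective <| xorVec_right_injective hu01 <| by rw [← hv, hv', hu]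
  exact xorVec_left_injective (F.sum_dir_zeroOne _) hu

lemma exists_isWalkEdge (hX01 : IsZeroOne X) (P : (ι → ℝ) → Prop) {s : ι → ℝ} (hs : P s)
    (ht : ¬ P (mirrorImage C s)) : ∃ u v, F.IsWalkEdge s u v ∧ P u ∧ ¬ P v := by
  rw [← F.walk_k_eq_mirrorImage hX01] at ht
  set m := Nat.findGreatest (fun n => P (F.walk s n)) F.k
  have hm : P (F.walk s m) :=
    Nat.findGreatest_spec (P := fun n => P (F.walk s n)) (Nat.zero_le _) (by rwa [F.walk_zero])
  have hmk : m < F.k := (Nat.findGreatest_le _).lt_of_ne fun h => ht (h ▸ hm)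
  exact ⟨_, _, ⟨⟨m, hmk⟩, rfl, rfl⟩, hm, Nat.findGreatest_is_greatest (Nat.lt_succ_self m) hmk⟩

end EdgeCubeFrame

lemma IsAffineEdgeCube.mirrorImage_mem (h : IsAffineEdgeCube X C) (hX01 : IsZeroOne X)
    {u : ι → ℝ} (hu : u ∈ C) : mirrorImage C u ∈ C := by
  rw [h.frame.mirrorImage_eq hX01]
  exact h.frame.xorVec_sum_mem hu _

/-- Walks use one fixed frame per cube, so that `s` can be recovered from `C`, `u` and `v`. -/
def IsCubeWalkEdge (X : Finset (ι → ℝ)) (C : Set (ι → ℝ)) (s u v : ι → ℝ) : Prop :=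
  ∃ hC : IsAffineEdgeCube X C, hC.frame.IsWalkEdge s u v

namespace IsCubeWalkEdge

variable {s u v : ι → ℝ}

lemma mem (hs : s ∈ C) (h : IsCubeWalkEdge X C s u v) : u ∈ C ∧ v ∈ C :=
  h.2.mem hs

lemma polytopeAdj (hs : s ∈ C) (h : IsCubeWalkEdge X C s u v) : PolytopeAdj X u v :=
  h.2.polytopeAdj hs

lemma eq (hX01 : IsZeroOne X) {s' : ι → ℝ} (hs : s ∈ C) (h : IsCubeWalkEdge X C s u v)
    (h' : IsCubeWalkEdge X C s' u v) : s = s' :=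
  h.2.eq hX01 hs h'.2

end IsCubeWalkEdge

lemma IsAffineEdgeCube.exists_isCubeWalkEdge (hC : IsAffineEdgeCube X C) (hX01 : IsZeroOne X)
    (P : (ι → ℝ) → Prop) {s : ι → ℝ} (hs : P s) (ht : ¬ P (mirrorImage C s)) :
    ∃ u v, IsCubeWalkEdge X C s u v ∧ P u ∧ ¬ P v :=
  let ⟨u, v, huv, hu, hv⟩ := hC.frame.exists_isWalkEdge hX01 P hs ht
  ⟨u, v, ⟨hC, huv⟩, hu, hv⟩

end EdgeCube

section UniqueSpanning

variable {ι : Type*} [Fintype ι] {X : Finset (ι → ℝ)}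

/-- The wall spanned by `C` is uniquely edge-cube spanned, with cube vertices `C`. -/
def IsUniqueSpanningEdgeCube (X : Finset (ι → ℝ)) (C : Set (ι → ℝ)) : Prop :=
  IsAffineEdgeCube X C ∧
    ∀ C', IsAffineEdgeCube X C' → spannedWall X C' = spannedWall X C → C' = C

lemma IsUniqueSpanningEdgeCube.eq_of_mirrorImage_eq (hX01 : IsZeroOne X)
    {A B : Set (ι → ℝ)} (hB : IsUniqueSpanningEdgeCube X B) (hA : IsAffineEdgeCube X A)
    {u : ι → ℝ} (huA : u ∈ A) (huB : u ∈ B) (h : mirrorImage A u = mirrorImage B u) :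
    A = B := by
  refine hB.2 A hA ?_
  rw [spannedWall_eq hX01 hA.1 huA, spannedWall_eq hX01 hB.1.1 huB]
  simp_rw [isStarCoord_iff_of_mirrorImage_eq (hX01 u (hA.1 huA)) h]

lemma two_mul_card_le_of_forall_mem (hX01 : IsZeroOne X) {u v : ι → ℝ} (huv : u ≠ v)
    (𝒞 : Finset (Set (ι → ℝ))) (h𝒞 : ∀ C ∈ 𝒞, IsUniqueSpanningEdgeCube X C ∧ u ∈ C ∧ v ∈ C) :
    2 * 𝒞.card ≤ X.card := by
  have hinj : ∀ w, (∀ C ∈ 𝒞, w ∈ C) → Set.InjOn (mirrorImage · w) 𝒞 :=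
    fun w hw A hA B hB h =>
      (h𝒞 B hB).1.eq_of_mirrorImage_eq hX01 (h𝒞 A hA).1.1 (hw A hA) (hw B hB) h
  have hdisj : Disjoint (𝒞.image (mirrorImage · u)) (𝒞.image (mirrorImage · v)) := by
    simp only [Finset.disjoint_left, Finset.mem_image]
    rintro _ ⟨A, hA, rfl⟩ ⟨B, hB, hAB⟩
    exact mirrorImage_ne_mirrorImage (h𝒞 A hA).2.1 (h𝒞 A hA).2.2 (h𝒞 B hB).2.1 (h𝒞 B hB).2.2
      huv hAB.symm
  have hsub : 𝒞.image (mirrorImage · u) ∪ 𝒞.image (mirrorImage · v) ⊆ X := by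
    simp only [Finset.union_subset_iff, Finset.image_subset_iff]
    exact ⟨fun C hC => (h𝒞 C hC).1.1.1 ((h𝒞 C hC).1.1.mirrorImage_mem hX01 (h𝒞 C hC).2.1),
      fun C hC => (h𝒞 C hC).1.1.1 ((h𝒞 C hC).1.1.mirrorImage_mem hX01 (h𝒞 C hC).2.2)⟩
  calc 2 * 𝒞.card
      = (𝒞.image (mirrorImage · u)).card + (𝒞.image (mirrorImage · v)).card := by
        rw [Finset.card_image_of_injOn (hinj u fun C hC => (h𝒞 C hC).2.1),
          Finset.card_image_of_injOn (hinj v fun C hC => (h𝒞 C hC).2.2), two_mul]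
    _ = (𝒞.image (mirrorImage · u) ∪ 𝒞.image (mirrorImage · v)).card :=
        (Finset.card_union_of_disjoint hdisj).symm
    _ ≤ X.card := Finset.card_le_card hsub

end UniqueSpanning

section EdgeExpansion

variable {V : Type*} [Fintype V] (G : SimpleGraph V)

lemma le_edgeExpansion {c : ℝ} (hV : 2 ≤ Fintype.card V)
    (h : ∀ S : Set V, S.Nonempty → 2 * S.ncard ≤ Fintype.card V → c * S.ncard ≤ cutCard G S) :
    c ≤ edgeExpansion G := by
  apply le_csInf
  · obtain ⟨v⟩ : Nonempty V := Fintype.card_pos_iff.1 (by omega)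
    exact ⟨_, {v}, Set.singleton_nonempty v, by rw [Set.ncard_singleton]; omega, rfl⟩
  · rintro r ⟨S, hS, hSV, rfl⟩
    rw [le_div_iff₀ (by exact_mod_cast (Set.ncard_pos S.toFinite).2 hS)]
    exact h S hS hSV

/-- `|S| |V| ≤ 2 |S| |Sᶜ| = 2 ∑_{e ∈ δ(S)} #(pairs routed through e) ≤ |δ(S)| |V|`. -/
lemma ncard_le_cutCard_of_routing (S : Set V) (hS : 2 * S.ncard ≤ Fintype.card V)
    (route : V × V → V × V)
    (hroute : ∀ p : V × V, p.1 ∈ S → p.2 ∉ S →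
      (route p).1 ∈ S ∧ (route p).2 ∉ S ∧ G.Adj (route p).1 (route p).2)
    (hload : ∀ e (F : Finset (V × V)), (∀ p ∈ F, p.1 ∈ S ∧ p.2 ∉ S ∧ route p = e) →
      2 * F.card ≤ Fintype.card V) :
    S.ncard ≤ cutCard G S := by
  set pairs := Finset.univ.filter fun p : V × V => p.1 ∈ S ∧ p.2 ∉ S
  set cut := Finset.univ.filter fun p : V × V => p.1 ∈ S ∧ p.2 ∉ S ∧ G.Adj p.1 p.2
  have hpairs : pairs.card = S.ncard * Sᶜ.ncard := by
    rw [Set.ncard_eq_toFinset_card', Set.ncard_eq_toFinset_card', ← Finset.card_product]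
    congr 1
    ext p
    simp [pairs]
  have hcut : cutCard G S = cut.card := by
    rw [cutCard, Set.ncard_eq_toFinset_card']
    congr 1
    ext p
    simp [cut]
  have hcompl : S.ncard + Sᶜ.ncard = Fintype.card V := by
    rw [Set.ncard_add_ncard_compl, Nat.card_eq_fintype_card]
  have hmaps : Set.MapsTo route pairs cut := fun p hp => by
    simp only [pairs, cut, Finset.coe_filter, Finset.mem_univ, true_and] at hp ⊢
    exact hroute p hp.1 hp.2
  have hcount : S.ncard * Fintype.card V ≤ cut.card * Fintype.card V :=
    calc S.ncard * Fintype.card V ≤ 2 * pairs.card := by rw [hpairs]; nlinarith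
      _ = ∑ e ∈ cut, 2 * (pairs.filter fun p => route p = e).card := by
        rw [Finset.card_eq_sum_card_fiberwise hmaps, Finset.mul_sum]
      _ ≤ ∑ _e ∈ cut, Fintype.card V := Finset.sum_le_sum fun e _ => hload e _ fun p hp => by
        simpa [pairs, and_assoc] using hp
      _ = cut.card * Fintype.card V := by rw [Finset.sum_const, smul_eq_mul]
  rw [hcut]
  rcases (Fintype.card V).eq_zero_or_pos with h0 | hpos
  · omega
  · exact Nat.le_of_mul_le_mul_right hcount hpos

end EdgeExpansion

section Main

variable {ι : Type*} [Fintype ι] {X : Finset (ι → ℝ)}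

lemma exists_route (hX01 : IsZeroOne X)
    (h : ∀ s ∈ X, ∀ t ∈ X, s ≠ t →
      ∃ C, IsUniqueSpanningEdgeCube X C ∧ s ∈ C ∧ t = mirrorImage C s)
    (S : Set {x // x ∈ X}) {s t : {x // x ∈ X}} (hs : s ∈ S) (ht : t ∉ S) :
    ∃ (C : Set (ι → ℝ)) (e : {x // x ∈ X} × {x // x ∈ X}),
      IsUniqueSpanningEdgeCube X C ∧ s.1 ∈ C ∧ t.1 = mirrorImage C s ∧
        IsCubeWalkEdge X C s e.1 e.2 ∧ e.1 ∈ S ∧ e.2 ∉ S := by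
  obtain ⟨C, hC, hsC, htC⟩ := h s s.2 t t.2 fun heq => ht (Subtype.ext heq ▸ hs)
  obtain ⟨u, v, huv, hu, hv⟩ := hC.1.exists_isCubeWalkEdge hX01 (· ∈ Subtype.val '' S)
    ⟨s, hs, rfl⟩ (by rwa [← htC, Subtype.val_injective.mem_set_image])
  have hmem := huv.mem hsC
  refine ⟨C, (⟨u, hC.1.1 hmem.1⟩, ⟨v, hC.1.1 hmem.2⟩), hC, hsC, htC, huv, ?_, ?_⟩
  · exact Subtype.val_injective.mem_set_image.1 hu
  · exact fun hvS => hv ⟨_, hvS, rfl⟩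

lemma ncard_le_cutCard_polytopeGraph (hX01 : IsZeroOne X)
    (h : ∀ s ∈ X, ∀ t ∈ X, s ≠ t →
      ∃ C, IsUniqueSpanningEdgeCube X C ∧ s ∈ C ∧ t = mirrorImage C s)
    (S : Set {x // x ∈ X}) (hS : 2 * S.ncard ≤ Fintype.card {x // x ∈ X}) :
    S.ncard ≤ cutCard (polytopeGraph X) S := by
  have hroute : ∀ p : {x // x ∈ X} × {x // x ∈ X},
      ∃ (C : Set (ι → ℝ)) (e : {x // x ∈ X} × {x // x ∈ X}), p.1 ∈ S → p.2 ∉ S →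
        IsUniqueSpanningEdgeCube X C ∧ p.1.1 ∈ C ∧ p.2.1 = mirrorImage C p.1 ∧
          IsCubeWalkEdge X C p.1 e.1 e.2 ∧ e.1 ∈ S ∧ e.2 ∉ S := fun p => by
    by_cases hp : p.1 ∈ S ∧ p.2 ∉ S
    · obtain ⟨C, e, he⟩ := exists_route hX01 h S hp.1 hp.2
      exact ⟨C, e, fun _ _ => he⟩
    · exact ⟨∅, p, fun hs ht => absurd ⟨hs, ht⟩ hp⟩
  choose C route hroute using hroute
  refine ncard_le_cutCard_of_routing _ S hS route
    (fun p hs ht => ?_) fun e load hload => ?_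
  · obtain ⟨-, hsC, -, hw, hu, hv⟩ := hroute p hs ht
    exact ⟨hu, hv, hw.polytopeAdj hsC⟩
  obtain rfl | ⟨p₀, hp₀⟩ := load.eq_empty_or_nonempty
  · simp
  have hinj : Set.InjOn C load := by
    intro p hp q hq hCpq
    obtain ⟨hps, hpt, hpe⟩ := hload p hp
    obtain ⟨hqs, hqt, hqe⟩ := hload q hq
    obtain ⟨-, hsp, htp, hwp, -⟩ := hroute p hps hpt
    obtain ⟨-, -, htq, hwq, -⟩ := hroute q hqs hqt
    rw [hpe] at hwp
    rw [hqe, ← hCpq] at hwq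
    have h1 : p.1 = q.1 := Subtype.ext (hwp.eq hX01 hsp hwq)
    exact Prod.ext h1 (Subtype.ext (by rw [htp, htq, hCpq, h1]))
  rw [← Finset.card_image_of_injOn hinj, Fintype.card_coe]
  obtain ⟨hs₀, ht₀, rfl⟩ := hload p₀ hp₀
  obtain ⟨-, -, -, -, hu₀, hv₀⟩ := hroute p₀ hs₀ ht₀
  refine two_mul_card_le_of_forall_mem hX01
    (Subtype.coe_ne_coe.2 (ne_of_mem_of_not_mem hu₀ hv₀)) _ fun C' hC' => ?_
  obtain ⟨p, hp, rfl⟩ := Finset.mem_image.1 hC'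
  obtain ⟨hps, hpt, hpe⟩ := hload p hp
  obtain ⟨hC, hsC, -, hw, -⟩ := hroute p hps hpt
  exact ⟨hC, hpe ▸ hw.mem hsC⟩

end Main

/-- Let `P ⊆ ℝ^d` be a 0/1-polytope with at least two vertices
such that for each pair of distinct vertices `s, t` there is a uniquely
edge-cube spanned wall of `P` whose unique spanning affine edge-cube `C`
contains `s` and `t`, with `t` the antipodal vertex of `s` in `C` (i.e. the
mirror image of `s` with respect to the star coordinates of `C`). Then
`h(G(P)) ≥ 1`. -/
theorem expansion_of_uniquely_edgeCube_spanned {d : ℕ} (X : Finset (Fin d → ℝ))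
    (hX01 : IsZeroOne X) (hcard : 2 ≤ X.card)
    (h : ∀ s ∈ X, ∀ t ∈ X, s ≠ t →
      ∃ C : Set (Fin d → ℝ), IsAffineEdgeCube X C ∧
        (∀ C' : Set (Fin d → ℝ), IsAffineEdgeCube X C' →
          spannedWall X C' = spannedWall X C → C' = C) ∧
        s ∈ C ∧ t = mirrorImage C s) :
    1 ≤ edgeExpansion (polytopeGraph X) := by
  have h' : ∀ s ∈ X, ∀ t ∈ X, s ≠ t →
      ∃ C, IsUniqueSpanningEdgeCube X C ∧ s ∈ C ∧ t = mirrorImage C s := by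
    simpa only [IsUniqueSpanningEdgeCube, and_assoc] using h
  refine le_edgeExpansion _ (by rwa [Fintype.card_coe]) fun S _ hS => ?_
  rw [one_mul]
  exact_mod_cast ncard_le_cutCard_polytopeGraph hX01 h' S hS
end
end
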